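/- arXiv:1107.1675 — 2 statements merged into one kernel-verified Lean document; each statement's English description precedes it below -/
import Mathlib

section
/- A ∇̄-parallel standard tractor (ρ, X^b, σ) satisfies X^b = ∇^bσ and ∇_a∇_bσ + σP_{ab} + ρg_{ab} = 0; consequently, on the open set where σ ≠ 0, the metric σ^{−2}g is Einstein. -/
/- A coordinate-chart framework for pseudo-Riemannian geometry on ℝⁿ:
metric, Christoffel symbols, covariant derivatives, curvature, Ricci,
Schouten, Weyl, Cotton and Bach tensors, and the standard tractor
connection, all written in index notation. -/

noncomputable section

open scoped BigOperators

/-- Points of the chart ℝⁿ. -/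
abbrev Pt (n : ℕ) := Fin n → ℝ

/-- Partial derivative of a scalar function in the coordinate direction `a`. -/
def pd {n : ℕ} (a : Fin n) (f : Pt n → ℝ) (x : Pt n) : ℝ :=
  fderiv ℝ f x (Pi.single a 1)

/-- A smooth vector field. -/
def SmoothVF {n : ℕ} (K : Pt n → Pt n) : Prop := ∀ b, ContDiff ℝ (⊤ : ℕ∞) (fun x => K x b)

/-- A smooth one-form. -/
def SmoothForm {n : ℕ} (f : Pt n → Fin n → ℝ) : Prop := ∀ b, ContDiff ℝ (⊤ : ℕ∞) (fun x => f x b)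

/-- A pseudo-Riemannian metric (of arbitrary signature) in a global
coordinate chart on ℝⁿ, given by its components `g x a b`, together with the
components `ginv` of its pointwise inverse. -/
structure MetricG (n : ℕ) where
  g : Pt n → Fin n → Fin n → ℝ
  ginv : Pt n → Fin n → Fin n → ℝ
  symm : ∀ x a b, g x a b = g x b a
  smooth : ∀ a b, ContDiff ℝ (⊤ : ℕ∞) (fun x => g x a b)
  inv_mul : ∀ x a c, (∑ b, ginv x a b * g x b c) = if a = c then (1:ℝ) else 0

namespace MetricG

variable {n : ℕ} (G : MetricG n)

/-- The inner product of two tangent vectors at `x`. -/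
def ip (x : Pt n) (X Y : Pt n) : ℝ := ∑ a, ∑ b, G.g x a b * X a * Y b

/-- Christoffel symbols Γ^c_{ab} of the Levi-Civita connection. -/
def Γ (c a b : Fin n) (x : Pt n) : ℝ :=
  (1/2) * ∑ d, G.ginv x c d *
    (pd a (fun y => G.g y d b) x + pd b (fun y => G.g y d a) x - pd d (fun y => G.g y a b) x)

/-- Covariant derivative (∇_a X)^b of a vector field. -/
def covVec (X : Pt n → Pt n) (a b : Fin n) (x : Pt n) : ℝ :=
  pd a (fun y => X y b) x + ∑ c, G.Γ b a c x * X x c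

/-- Covariant derivative ∇_a ω_b of a one-form. -/
def cov1 (ω : Pt n → Fin n → ℝ) (a b : Fin n) (x : Pt n) : ℝ :=
  pd a (fun y => ω y b) x - ∑ e, G.Γ e a b x * ω x e

/-- Covariant derivative ∇_a T_{bc} of a (0,2)-tensor field. -/
def cov2 (T : Pt n → Fin n → Fin n → ℝ) (a b c : Fin n) (x : Pt n) : ℝ :=
  pd a (fun y => T y b c) x - ∑ e, G.Γ e a b x * T x e c - ∑ e, G.Γ e a c x * T x b e

/-- Covariant derivative ∇_a T_{bcd} of a (0,3)-tensor field. -/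
def cov3 (T : Pt n → Fin n → Fin n → Fin n → ℝ) (a b c d : Fin n) (x : Pt n) : ℝ :=
  pd a (fun y => T y b c d) x - ∑ e, G.Γ e a b x * T x e c d
    - ∑ e, G.Γ e a c x * T x b e d - ∑ e, G.Γ e a d x * T x b c e

/-- Curvature tensor R_{ab}{}^c{}_d, with the convention
`(∇_a∇_b − ∇_b∇_a)X^c = R_{ab}{}^c{}_d X^d`. -/
def Riem (a b c d : Fin n) (x : Pt n) : ℝ :=
  pd a (fun y => G.Γ c b d y) x - pd b (fun y => G.Γ c a d y) x
    + ∑ e, (G.Γ c a e x * G.Γ e b d x - G.Γ c b e x * G.Γ e a d x)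

/-- (4,0)-curvature tensor R_{abcd} = g_{ce} R_{ab}{}^e{}_d. -/
def Riem4 (a b c d : Fin n) (x : Pt n) : ℝ :=
  ∑ e, G.g x c e * G.Riem a b e d x

/-- Ricci tensor R_{bd} = R_{cb}{}^c{}_d. -/
def Ricci (b d : Fin n) (x : Pt n) : ℝ := ∑ c, G.Riem c b c d x

/-- Scalar curvature R = g^{ab} R_{ab}. -/
def Scal (x : Pt n) : ℝ := ∑ a, ∑ b, G.ginv x a b * G.Ricci a b x

/-- Schouten tensor P_{ab} = (1/(n−2)) (R_{ab} − R/(2(n−1)) g_{ab}). -/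
def Schouten (a b : Fin n) (x : Pt n) : ℝ :=
  (1 / ((n : ℝ) - 2)) * (G.Ricci a b x - G.Scal x / (2 * ((n : ℝ) - 1)) * G.g x a b)

/-- Weyl tensor C_{abcd} = R_{abcd} − 2(g_{c[a}P_{b]d} + g_{d[b}P_{a]c}). -/
def Weyl (a b c d : Fin n) (x : Pt n) : ℝ :=
  G.Riem4 a b c d x -
    (G.g x c a * G.Schouten b d x - G.g x c b * G.Schouten a d x
      + G.g x d b * G.Schouten a c x - G.g x d a * G.Schouten b c x)

/-- Cotton tensor A_{abc} = ∇_b P_{ca} − ∇_c P_{ba} (= 2∇_{[b}P_{c]a}). -/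
def Cotton (a b c : Fin n) (x : Pt n) : ℝ :=
  G.cov2 (fun y i j => G.Schouten i j y) b c a x - G.cov2 (fun y i j => G.Schouten i j y) c b a x

/-- Bach tensor B_{ab} = ∇^c A_{acb} + P^{dc} C_{dacb}. -/
def Bach (a b : Fin n) (x : Pt n) : ℝ :=
  (∑ c, ∑ e, G.ginv x c e * G.cov3 (fun y i j k => G.Cotton i j k y) e a c b x)
    + ∑ d, ∑ c, (∑ i, ∑ j, G.ginv x d i * G.ginv x c j * G.Schouten i j x) * G.Weyl d a c b x

/-- `K` is a null vector field. -/
def IsNull (K : Pt n → Pt n) : Prop := ∀ x, G.ip x (K x) (K x) = 0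

/-- Pure radiation condition: Ric(X,·) = 0 for every vector X orthogonal to K. -/
def PureRadiation (K : Pt n → Pt n) : Prop :=
  ∀ x (X : Pt n), G.ip x (K x) X = 0 → ∀ b, (∑ a, G.Ricci a b x * X a) = 0

/-- Parallel rays condition: ∇_a K^b = f_a K^b. -/
def ParallelRays (K : Pt n → Pt n) (f : Pt n → Fin n → ℝ) : Prop :=
  ∀ x a b, G.covVec K a b x = f x a * K x b

/-- first (ℝ-) component of the tractor derivative of the tractor (ρ, X, σ):
∇_a ρ − P_{ab} X^b. -/
def trD0 (ρ : Pt n → ℝ) (X : Pt n → Pt n) (a : Fin n) (x : Pt n) : ℝ :=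
  pd a ρ x - ∑ b, G.Schouten a b x * X x b

/-- middle (TM-) component of the tractor derivative of the tractor (ρ, X, σ):
∇_a X^b + ρ δ_a{}^b + σ P_a{}^b. -/
def trD1 (ρ : Pt n → ℝ) (X : Pt n → Pt n) (σ : Pt n → ℝ) (a b : Fin n) (x : Pt n) : ℝ :=
  G.covVec X a b x + ρ x * (if a = b then (1:ℝ) else 0)
    + σ x * ∑ e, G.ginv x b e * G.Schouten a e x

/-- last (ℝ-) component of the tractor derivative of the tractor (ρ, X, σ):
∇_a σ − g_{ab} X^b. -/
def trD2 (X : Pt n → Pt n) (σ : Pt n → ℝ) (a : Fin n) (x : Pt n) : ℝ :=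
  pd a σ x - ∑ b, G.g x a b * X x b

end MetricG
namespace PDAPI
variable {n : ℕ} {f g : Pt n → ℝ} {x : Pt n} {a b : Fin n}

lemma pd_congr (h : f =ᶠ[nhds x] g) : pd a f x = pd a g x := by
  unfold pd; rw [Filter.EventuallyEq.fderiv_eq h]

lemma pd_add (hf : DifferentiableAt ℝ f x) (hg : DifferentiableAt ℝ g x) :
    pd a (fun y => f y + g y) x = pd a f x + pd a g x := by
  unfold pd; rw [fderiv_fun_add hf hg]; rfl

lemma pd_mul (hf : DifferentiableAt ℝ f x) (hg : DifferentiableAt ℝ g x) :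
    pd a (fun y => f y * g y) x = pd a f x * g x + f x * pd a g x := by
  unfold pd; rw [fderiv_fun_mul hf hg]; simp [mul_comm]; ring

lemma pd_const (c : ℝ) : pd a (fun _ => c) x = 0 := by
  unfold pd; simp

lemma pd_neg : pd a (fun y => -f y) x = -pd a f x := by
  unfold pd; rw [fderiv_fun_neg]; rfl

lemma pd_sub (hf : DifferentiableAt ℝ f x) (hg : DifferentiableAt ℝ g x) :
    pd a (fun y => f y - g y) x = pd a f x - pd a g x := by
  unfold pd; rw [fderiv_fun_sub hf hg]; rfl

lemma pd_const_mul (c : ℝ) (hf : DifferentiableAt ℝ f x) :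
    pd a (fun y => c * f y) x = c * pd a f x := by
  unfold pd; rw [fderiv_const_mul hf]; rfl

lemma pd_sum {ι : Type*} (s : Finset ι) (F : ι → Pt n → ℝ)
    (hF : ∀ i ∈ s, DifferentiableAt ℝ (F i) x) :
    pd a (fun y => ∑ i ∈ s, F i y) x = ∑ i ∈ s, pd a (F i) x := by
  unfold pd; rw [fderiv_fun_sum hF]; simp

lemma pd_inv (hf : DifferentiableAt ℝ f x) (h0 : f x ≠ 0) :
    pd a (fun y => (f y)⁻¹) x = -pd a f x / (f x)^2 := by
  unfold pd
  rw [fderiv_comp' x (differentiableAt_inv h0) hf]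
  simp [fderiv_inv]
  ring

lemma contDiff_pd (hf : ContDiff ℝ (⊤ : ℕ∞) f) : ContDiff ℝ (⊤ : ℕ∞) (pd a f) := by
  have h1 : ContDiff ℝ (⊤ : ℕ∞) (fderiv ℝ f) := hf.fderiv_right (by simp)
  exact h1.clm_apply contDiff_const

lemma pd_comm (hf : ContDiff ℝ (⊤ : ℕ∞) f) :
    pd a (pd b f) x = pd b (pd a f) x := by
  have hd : ContDiff ℝ (⊤ : ℕ∞) (fderiv ℝ f) := hf.fderiv_right (by simp)
  have key : ∀ (c d : Fin n), pd c (pd d f) x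
      = fderiv ℝ (fderiv ℝ f) x (Pi.single c 1) (Pi.single d 1) := by
    intro c d
    unfold pd
    rw [fderiv_clm_apply (hd.differentiable (by simp) x) (differentiableAt_const _)]
    simp
  rw [key, key]
  have hsymm : IsSymmSndFDerivAt ℝ f x := (hf.contDiffAt).isSymmSndFDerivAt (by rw [minSmoothness_of_isRCLikeNormedField]; exact WithTop.coe_le_coe.mpr le_top)
  exact hsymm _ _

end PDAPI
open PDAPI
-- matrix facts
namespace MetricG
open PDAPI
variable {n : ℕ} (G : MetricG n)

def mat (x : Pt n) : Matrix (Fin n) (Fin n) ℝ := Matrix.of fun a b => G.g x a b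
def imat (x : Pt n) : Matrix (Fin n) (Fin n) ℝ := Matrix.of fun a b => G.ginv x a b

lemma imat_mul_mat (x : Pt n) : G.imat x * G.mat x = 1 := by
  ext a c
  simp [Matrix.mul_apply, mat, imat, Matrix.one_apply, G.inv_mul]

lemma mat_mul_imat (x : Pt n) : G.mat x * G.imat x = 1 :=
  mul_eq_one_comm.mp (G.imat_mul_mat x)

lemma mul_inv (x : Pt n) (a c : Fin n) :
    (∑ b, G.g x a b * G.ginv x b c) = if a = c then (1:ℝ) else 0 := by
  have := congrFun (congrFun (G.mat_mul_imat x) a) c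
  simpa [Matrix.mul_apply, mat, imat, Matrix.one_apply] using this

lemma imat_eq_inv (x : Pt n) : G.imat x = (G.mat x)⁻¹ :=
  (Matrix.inv_eq_left_inv (G.imat_mul_mat x)).symm

lemma mat_transpose (x : Pt n) : Matrix.transpose (G.mat x) = G.mat x := by
  ext a b; simp [mat, Matrix.transpose_apply, G.symm x a b]

lemma ginv_symm (x : Pt n) (a b : Fin n) : G.ginv x a b = G.ginv x b a := by
  have h : Matrix.transpose (G.imat x) = G.imat x := by
    rw [imat_eq_inv, Matrix.transpose_nonsing_inv, mat_transpose]
  have := congrFun (congrFun h b) a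
  simpa [Matrix.transpose_apply, imat] using this

/-- uniqueness of the inverse components -/
lemma ginv_unique (x : Pt n) (A : Fin n → Fin n → ℝ)
    (h : ∀ a c, (∑ b, A a b * G.g x b c) = if a = c then (1:ℝ) else 0) :
    ∀ a b, G.ginv x a b = A a b := by
  have h1 : (Matrix.of A) * G.mat x = 1 := by
    ext a c; simp [Matrix.mul_apply, mat, Matrix.one_apply, h]
  have := Matrix.left_inv_eq_left_inv (G.imat_mul_mat x) h1
  intro a b
  exact congrFun (congrFun this a) b

lemma contDiff_det {m : ℕ} (M : Pt n → Matrix (Fin m) (Fin m) ℝ)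
    (hM : ∀ a b, ContDiff ℝ (⊤ : ℕ∞) (fun x => M x a b)) :
    ContDiff ℝ (⊤ : ℕ∞) (fun x => (M x).det) := by
  simp only [Matrix.det_apply]
  apply ContDiff.sum
  intro σ _
  have hp : ContDiff ℝ (⊤ : ℕ∞) (fun x => ∏ i, M x (σ i) i) := by
    classical
    induction (Finset.univ : Finset (Fin m)) using Finset.induction with
    | empty => simpa using contDiff_const
    | insert _ _ hni ih =>
      simp only [Finset.prod_insert hni]
      exact (hM _ _).mul ih
  have : (fun x => Equiv.Perm.sign σ • ∏ i, M x (σ i) i)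
      = (fun x => ((Equiv.Perm.sign σ : ℤ) : ℝ) * ∏ i, M x (σ i) i) := by
    funext x; simp [Units.smul_def, zsmul_eq_mul]
  rw [this]
  exact contDiff_const.mul hp

lemma contDiff_ginv (a b : Fin n) : ContDiff ℝ (⊤ : ℕ∞) (fun x => G.ginv x a b) := by
  have hdet : ∀ x, (G.mat x).det ≠ 0 := by
    intro x
    intro h0
    have : (G.imat x * G.mat x).det = (1 : Matrix (Fin n) (Fin n) ℝ).det := by
      rw [G.imat_mul_mat]
    rw [Matrix.det_mul, h0, mul_zero, Matrix.det_one] at this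
    norm_num at this
  have hgi : ∀ x, G.ginv x a b = ((G.mat x).det)⁻¹ * (G.mat x).adjugate a b := by
    intro x
    have := congrFun (congrFun (G.imat_eq_inv x) a) b
    rw [Matrix.inv_def] at this
    simpa [imat, Ring.inverse_eq_inv'] using this
  have h1 : ContDiff ℝ (⊤ : ℕ∞) (fun x => (G.mat x).det) :=
    contDiff_det (G.mat) (fun a b => G.smooth a b)
  have h2 : ContDiff ℝ (⊤ : ℕ∞) (fun x => (G.mat x).adjugate a b) := by
    simp only [Matrix.adjugate_apply]
    apply contDiff_det
    intro i j
    by_cases hij : i = b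
    · subst hij
      have : (fun x => (G.mat x).updateRow i (Pi.single a (1:ℝ)) i j)
          = (fun _ : Pt n => (Pi.single a (1:ℝ) : Fin n → ℝ) j) := by
        funext x; simp [Matrix.updateRow_self]
      rw [this]; exact contDiff_const
    · have : (fun x => (G.mat x).updateRow b (Pi.single a (1:ℝ)) i j)
          = (fun x => G.g x i j) := by
        funext x; simp [Matrix.updateRow_ne hij, mat]
      rw [this]; exact G.smooth i j
  have heq : (fun x => G.ginv x a b)
      = (fun x => ((G.mat x).det)⁻¹ * (G.mat x).adjugate a b) := funext hgi
  rw [heq]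
  exact (h1.inv hdet).mul h2

end MetricG
namespace MetricG
open PDAPI
variable {n : ℕ} (G : MetricG n)

lemma diff_g (a b : Fin n) (x : Pt n) : DifferentiableAt ℝ (fun y => G.g y a b) x :=
  (G.smooth a b).differentiable (by simp) x

lemma contDiff_pdg (a b c : Fin n) : ContDiff ℝ (⊤ : ℕ∞) (pd a (fun y => G.g y b c)) :=
  contDiff_pd (G.smooth b c)

lemma diff_ginv (a b : Fin n) (x : Pt n) : DifferentiableAt ℝ (fun y => G.ginv y a b) x :=
  (G.contDiff_ginv a b).differentiable (by simp) x

lemma contDiff_Γ (c a b : Fin n) : ContDiff ℝ (⊤ : ℕ∞) (fun y => G.Γ c a b y) := by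
  unfold Γ
  apply ContDiff.mul contDiff_const
  apply ContDiff.sum
  intro d _
  exact (G.contDiff_ginv c d).mul
    (((G.contDiff_pdg a d b).add (G.contDiff_pdg b d a)).sub (G.contDiff_pdg d a b))

lemma diff_Γ (c a b : Fin n) (x : Pt n) : DifferentiableAt ℝ (fun y => G.Γ c a b y) x :=
  (G.contDiff_Γ c a b).differentiable (by simp) x

lemma pd_ginv (e a d : Fin n) (x : Pt n) :
    pd e (fun y => G.ginv y a d) x
      = -∑ b, ∑ c, G.ginv x a b * pd e (fun y => G.g y b c) x * G.ginv x c d := by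
  have key : ∀ c, (∑ b, pd e (fun y => G.ginv y a b) x * G.g x b c)
      + (∑ b, G.ginv x a b * pd e (fun y => G.g y b c) x) = 0 := by
    intro c
    have h0 : pd e (fun y => ∑ b, G.ginv y a b * G.g y b c) x = 0 := by
      have : (fun y => ∑ b, G.ginv y a b * G.g y b c)
          = (fun _ : Pt n => if a = c then (1:ℝ) else 0) := by
        funext y; exact G.inv_mul y a c
      rw [this, pd_const]
    rw [pd_sum _ (fun b y => G.ginv y a b * G.g y b c) (fun b _ => ((G.diff_ginv a b x).mul (G.diff_g b c x)))] at h0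
    have : ∀ b ∈ Finset.univ, pd e (fun y => G.ginv y a b * G.g y b c) x
        = pd e (fun y => G.ginv y a b) x * G.g x b c
          + G.ginv x a b * pd e (fun y => G.g y b c) x :=
      fun b _ => pd_mul (G.diff_ginv a b x) (G.diff_g b c x)
    rw [Finset.sum_congr rfl this, Finset.sum_add_distrib] at h0
    exact h0
  have h2 : ∀ c, (∑ b, pd e (fun y => G.ginv y a b) x * G.g x b c)
      = -(∑ b, G.ginv x a b * pd e (fun y => G.g y b c) x) := by
    intro c; linarith [key c]
  calc pd e (fun y => G.ginv y a d) x
      = ∑ c, (∑ b, pd e (fun y => G.ginv y a b) x * G.g x b c) * G.ginv x c d := by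
        simp only [Finset.sum_mul]
        rw [Finset.sum_comm]
        have : ∀ b, ∑ c, pd e (fun y => G.ginv y a b) x * G.g x b c * G.ginv x c d
            = pd e (fun y => G.ginv y a b) x * (if b = d then (1:ℝ) else 0) := by
          intro b
          rw [← G.mul_inv x b d, Finset.mul_sum]
          exact Finset.sum_congr rfl (fun c _ => by ring)
        rw [Finset.sum_congr rfl (fun b _ => this b)]
        simp
    _ = -∑ b, ∑ c, G.ginv x a b * pd e (fun y => G.g y b c) x * G.ginv x c d := by
        rw [Finset.sum_congr rfl (fun c _ => by rw [h2 c])]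
        simp only [neg_mul, Finset.sum_mul, Finset.sum_neg_distrib, neg_inj]
        exact Finset.sum_comm

end MetricG
namespace PDAPI
variable {n : ℕ}

lemma sum_delta' (d : Fin n) (f : Fin n → ℝ) :
    ∑ b, (if d = b then (1:ℝ) else 0) * f b = f d := by
  simp [ite_mul]

lemma sum_delta_mul' (d : Fin n) (f : Fin n → ℝ) :
    ∑ b, f b * (if d = b then (1:ℝ) else 0) = f d := by
  simp [mul_ite]

lemma mul_const_sum (g c0 : ℝ) (f h : Fin n → ℝ) :
    g * (c0 * ∑ e, f e * h e) = c0 * ∑ e, g * f e * h e := by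
  rw [Finset.mul_sum, Finset.mul_sum, Finset.mul_sum]
  rw [Finset.sum_congr rfl (fun e (_ : e ∈ Finset.univ) => show g * (c0 * (f e * h e)) = c0 * (g * f e * h e) by ring)]

lemma sum4_swap (F : Fin n → Fin n → Fin n → Fin n → ℝ) :
    ∑ c, ∑ e, ∑ p, ∑ q, F c e p q = ∑ c, ∑ e, ∑ p, ∑ q, F p q c e := by
  rw [Finset.sum_congr rfl (fun c _ => Finset.sum_comm)]
  rw [Finset.sum_comm]
  rw [Finset.sum_congr rfl (fun p _ => Finset.sum_congr rfl (fun c _ => Finset.sum_comm))]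
  rw [Finset.sum_congr rfl (fun p _ => Finset.sum_comm)]

end PDAPI

namespace MetricG
open PDAPI
variable {n : ℕ} (G : MetricG n)

lemma Γ_symm (c a b : Fin n) (x : Pt n) : G.Γ c a b x = G.Γ c b a x := by
  unfold Γ
  congr 1
  apply Finset.sum_congr rfl
  intro d _
  have h : (fun y => G.g y a b) = (fun y => G.g y b a) := funext (fun y => G.symm y a b)
  rw [h]
  ring

lemma lowerΓ (d a b : Fin n) (x : Pt n) :
    ∑ c, G.g x d c * G.Γ c a b x
      = (1/2) * (pd a (fun y => G.g y d b) x + pd b (fun y => G.g y d a) x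
          - pd d (fun y => G.g y a b) x) := by
  unfold Γ
  have step : ∀ c, G.g x d c * ((1/2) * ∑ e, G.ginv x c e *
      (pd a (fun y => G.g y e b) x + pd b (fun y => G.g y e a) x - pd e (fun y => G.g y a b) x))
      = (1/2) * ∑ e, G.g x d c * G.ginv x c e *
      (pd a (fun y => G.g y e b) x + pd b (fun y => G.g y e a) x - pd e (fun y => G.g y a b) x) :=
    fun c => mul_const_sum _ _ _ _
  rw [Finset.sum_congr rfl (fun c _ => step c), ← Finset.mul_sum]
  congr 1
  rw [Finset.sum_comm]
  have inner : ∀ e, ∑ c, G.g x d c * G.ginv x c e *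
      (pd a (fun y => G.g y e b) x + pd b (fun y => G.g y e a) x - pd e (fun y => G.g y a b) x)
      = (if d = e then (1:ℝ) else 0) *
      (pd a (fun y => G.g y e b) x + pd b (fun y => G.g y e a) x - pd e (fun y => G.g y a b) x) := by
    intro e
    rw [← Finset.sum_mul, G.mul_inv]
  rw [Finset.sum_congr rfl (fun e _ => inner e), sum_delta' d]

lemma pdg_symm (c a b : Fin n) (x : Pt n) :
    pd c (fun y => G.g y b a) x = pd c (fun y => G.g y a b) x := by
  have : (fun y => G.g y b a) = (fun y => G.g y a b) := funext (fun y => G.symm y b a)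
  rw [this]

lemma metric_compat (e a b : Fin n) (x : Pt n) :
    pd e (fun y => G.g y a b) x
      = ∑ c, G.Γ c e a x * G.g x c b + ∑ c, G.Γ c e b x * G.g x c a := by
  have h1 := G.lowerΓ b e a x
  have h2 := G.lowerΓ a e b x
  have e1 : ∑ c, G.Γ c e a x * G.g x c b = ∑ c, G.g x b c * G.Γ c e a x :=
    Finset.sum_congr rfl (fun c _ => by rw [G.symm x b c]; ring)
  have e2 : ∑ c, G.Γ c e b x * G.g x c a = ∑ c, G.g x a c * G.Γ c e b x :=
    Finset.sum_congr rfl (fun c _ => by rw [G.symm x a c]; ring)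
  rw [e1, e2, h1, h2]
  rw [G.pdg_symm e a b, G.pdg_symm a e b, G.pdg_symm b e a]
  ring

lemma traceΓ (d : Fin n) (x : Pt n) :
    ∑ c, G.Γ c c d x = (1/2) * ∑ c, ∑ e, G.ginv x c e * pd d (fun y => G.g y c e) x := by
  unfold Γ
  rw [← Finset.mul_sum]
  congr 1
  have expand : ∀ c, ∑ e, G.ginv x c e *
      (pd c (fun y => G.g y e d) x + pd d (fun y => G.g y e c) x - pd e (fun y => G.g y c d) x)
      = ∑ e, (G.ginv x c e * pd c (fun y => G.g y e d) x
          + G.ginv x c e * pd d (fun y => G.g y e c) x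
          - G.ginv x c e * pd e (fun y => G.g y c d) x) := by
    intro c; exact Finset.sum_congr rfl (fun e _ => by ring)
  rw [Finset.sum_congr rfl (fun c _ => expand c)]
  simp only [Finset.sum_sub_distrib, Finset.sum_add_distrib]
  have cancel : ∑ c, ∑ e, G.ginv x c e * pd c (fun y => G.g y e d) x
      = ∑ c, ∑ e, G.ginv x c e * pd e (fun y => G.g y c d) x := by
    rw [Finset.sum_comm]
    apply Finset.sum_congr rfl; intro c _
    apply Finset.sum_congr rfl; intro e _
    rw [G.ginv_symm x e c]
  have swap2 : ∀ c e, G.ginv x c e * pd d (fun y => G.g y e c) x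
      = G.ginv x c e * pd d (fun y => G.g y c e) x := by
    intro c e
    have : (fun y => G.g y e c) = (fun y => G.g y c e) := funext (fun y => G.symm y e c)
    rw [this]
  rw [cancel]
  rw [Finset.sum_congr rfl (fun c _ => Finset.sum_congr rfl (fun e _ => swap2 c e))]
  ring

end MetricG
namespace MetricG
open PDAPI
variable {n : ℕ} (G : MetricG n)

lemma diff_pdg (d c e : Fin n) (x : Pt n) :
    DifferentiableAt ℝ (pd d (fun y => G.g y c e)) x :=
  (G.contDiff_pdg d c e).differentiable (by simp) x

lemma trace_pd_symm (b d : Fin n) (x : Pt n) :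
    ∑ c, pd b (fun y => G.Γ c c d y) x = ∑ c, pd d (fun y => G.Γ c c b y) x := by
  have key : ∀ (b d : Fin n), ∑ c, pd b (fun y => G.Γ c c d y) x
      = (1/2) * ((∑ c, ∑ e, pd b (fun y => G.ginv y c e) x * pd d (fun y => G.g y c e) x)
        + ∑ c, ∑ e, G.ginv x c e * pd b (pd d (fun y => G.g y c e)) x) := by
    intro b d
    rw [← pd_sum _ _ (fun c _ => G.diff_Γ c c d x)]
    have hfe : (fun y => ∑ c, G.Γ c c d y)
        = (fun y => (1/2) * ∑ c, ∑ e, G.ginv y c e * pd d (fun z => G.g z c e) y) :=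
      funext (fun y => G.traceΓ d y)
    rw [hfe]
    have hdiff : ∀ c, ∀ e, DifferentiableAt ℝ
        (fun y => G.ginv y c e * pd d (fun z => G.g z c e) y) x :=
      fun c e => (G.diff_ginv c e x).mul (G.diff_pdg d c e x)
    rw [pd_const_mul _ (by
      apply DifferentiableAt.fun_sum; intro c _
      exact DifferentiableAt.fun_sum (fun e _ => hdiff c e))]
    congr 1
    rw [pd_sum _ _ (fun c _ => DifferentiableAt.fun_sum (fun e _ => hdiff c e))]
    rw [Finset.sum_congr rfl (fun c _ => pd_sum _ _ (fun e _ => hdiff c e))]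
    rw [Finset.sum_congr rfl (fun c _ => Finset.sum_congr rfl
      (fun e _ => pd_mul (G.diff_ginv c e x) (G.diff_pdg d c e x)))]
    rw [Finset.sum_congr rfl (fun c _ => Finset.sum_add_distrib), Finset.sum_add_distrib]
  rw [key b d, key d b]
  have hB : ∑ c, ∑ e, G.ginv x c e * pd b (pd d (fun y => G.g y c e)) x
      = ∑ c, ∑ e, G.ginv x c e * pd d (pd b (fun y => G.g y c e)) x := by
    apply Finset.sum_congr rfl; intro c _
    apply Finset.sum_congr rfl; intro e _
    rw [pd_comm (G.smooth c e)]
  have hA : ∑ c, ∑ e, pd b (fun y => G.ginv y c e) x * pd d (fun y => G.g y c e) x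
      = ∑ c, ∑ e, pd d (fun y => G.ginv y c e) x * pd b (fun y => G.g y c e) x := by
    have expand : ∀ (u v : Fin n), ∑ c, ∑ e, pd u (fun y => G.ginv y c e) x * pd v (fun y => G.g y c e) x
        = -∑ c, ∑ e, ∑ p, ∑ q, G.ginv x c p * pd u (fun y => G.g y p q) x * G.ginv x q e
            * pd v (fun y => G.g y c e) x := by
      intro u v
      rw [← Finset.sum_neg_distrib]
      apply Finset.sum_congr rfl; intro c _
      rw [← Finset.sum_neg_distrib]
      apply Finset.sum_congr rfl; intro e _
      rw [G.pd_ginv u c e x, neg_mul, neg_inj]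
      rw [Finset.sum_mul]
      apply Finset.sum_congr rfl; intro p _
      rw [Finset.sum_mul]
    rw [expand b d, expand d b, neg_inj]
    rw [sum4_swap]
    apply Finset.sum_congr rfl; intro c _
    apply Finset.sum_congr rfl; intro e _
    apply Finset.sum_congr rfl; intro p _
    apply Finset.sum_congr rfl; intro q _
    rw [G.ginv_symm x p c, G.ginv_symm x e q]
    ring
  rw [hA, hB]

lemma ricci_symm (b d : Fin n) (x : Pt n) : G.Ricci b d x = G.Ricci d b x := by
  unfold Ricci Riem
  simp only [Finset.sum_add_distrib, Finset.sum_sub_distrib]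
  have h1 : ∑ c, pd c (fun y => G.Γ c b d y) x = ∑ c, pd c (fun y => G.Γ c d b y) x := by
    apply Finset.sum_congr rfl; intro c _
    have : (fun y => G.Γ c b d y) = (fun y => G.Γ c d b y) := funext (fun y => G.Γ_symm c b d y)
    rw [this]
  have h2 := G.trace_pd_symm b d x
  have h3 : ∑ c, ∑ e, (G.Γ c c e x * G.Γ e b d x - G.Γ c b e x * G.Γ e c d x)
      = ∑ c, ∑ e, (G.Γ c c e x * G.Γ e d b x - G.Γ c d e x * G.Γ e c b x) := by
    simp only [Finset.sum_sub_distrib]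
    congr 1
    · apply Finset.sum_congr rfl; intro c _
      apply Finset.sum_congr rfl; intro e _
      rw [G.Γ_symm e b d]
    · rw [Finset.sum_comm]
      apply Finset.sum_congr rfl; intro c _
      apply Finset.sum_congr rfl; intro e _
      rw [G.Γ_symm e b c, G.Γ_symm c e d]
      ring
  rw [h1, h2]
  simp only [Finset.sum_sub_distrib] at h3
  linarith [h3]

end MetricG
section Parts
open PDAPI MetricG
variable {n : ℕ} (G : MetricG n)
variable (ρ σ : Pt n → ℝ) (X : Pt n → Pt n)

lemma part1_aux (htr2 : ∀ x a, G.trD2 X σ a x = 0) :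
    ∀ x b, X x b = ∑ a, G.ginv x b a * pd a σ x := by
  intro x b
  have h2 : ∀ a, pd a σ x = ∑ c, G.g x a c * X x c := by
    intro a
    have := htr2 x a
    unfold MetricG.trD2 at this
    linarith [this]
  calc X x b = ∑ a, (if b = a then (1:ℝ) else 0) * X x a := (sum_delta' b _).symm
    _ = ∑ a, (∑ c, G.ginv x b c * G.g x c a) * X x a := by
        apply Finset.sum_congr rfl; intro a _; rw [G.inv_mul x b a]
    _ = ∑ a, G.ginv x b a * pd a σ x := by
        have l1 : ∀ a : Fin n, (∑ c, G.ginv x b c * G.g x c a) * X x a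
            = ∑ c, G.ginv x b c * G.g x c a * X x a := fun a => Finset.sum_mul _ _ _
        rw [Finset.sum_congr rfl (fun a _ => l1 a), Finset.sum_comm]
        apply Finset.sum_congr rfl; intro a _
        rw [h2 a, Finset.mul_sum]
        exact Finset.sum_congr rfl (fun c _ => by ring)

lemma part2_aux (hσ : ContDiff ℝ (⊤ : ℕ∞) σ) (hX : SmoothVF X)
    (htr1 : ∀ x a b, G.trD1 ρ X σ a b x = 0)
    (htr2 : ∀ x a, G.trD2 X σ a x = 0) :
    ∀ x a b, (pd a (fun y => pd b σ y) x - ∑ e, G.Γ e a b x * pd e σ x)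
        + σ x * G.Schouten a b x + ρ x * G.g x a b = 0 := by
  intro x a b
  have h2 : ∀ y a, pd a σ y = ∑ c, G.g y a c * X y c := by
    intro y a
    have := htr2 y a
    unfold MetricG.trD2 at this
    linarith [this]
  have hXd : ∀ (c : Fin n) (y : Pt n), DifferentiableAt ℝ (fun z => X z c) y :=
    fun c y => (hX c).differentiable (by simp) y
  -- expand pd a (pd b σ)
  have e1 : pd a (fun y => pd b σ y) x
      = ∑ c, (pd a (fun y => G.g y b c) x * X x c + G.g x b c * pd a (fun y => X y c) x) := by
    have hfe : (fun y => pd b σ y) = (fun y => ∑ c, G.g y b c * X y c) :=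
      funext (fun y => h2 y b)
    rw [hfe, pd_sum _ (fun c y => G.g y b c * X y c) (fun c _ => (G.diff_g b c x).mul (hXd c x))]
    exact Finset.sum_congr rfl (fun c _ => pd_mul (G.diff_g b c x) (hXd c x))
  -- use trD1
  have e2 : ∀ c, pd a (fun y => X y c) x
      = -∑ e, G.Γ c a e x * X x e - ρ x * (if a = c then (1:ℝ) else 0)
        - σ x * ∑ e, G.ginv x c e * G.Schouten a e x := by
    intro c
    have := htr1 x a c
    unfold MetricG.trD1 MetricG.covVec at this
    linarith [this]
  -- contract with g
  have e3 : ∑ c, G.g x b c * pd a (fun y => X y c) x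
      = -∑ c, ∑ e, G.g x b c * G.Γ c a e x * X x e - ρ x * G.g x b a
        - σ x * G.Schouten a b x := by
    rw [Finset.sum_congr rfl (fun c _ => by rw [e2 c])]
    have t1 : ∑ c, G.g x b c * (-∑ e, G.Γ c a e x * X x e
        - ρ x * (if a = c then (1:ℝ) else 0)
        - σ x * ∑ e, G.ginv x c e * G.Schouten a e x)
        = (∑ c, G.g x b c * (-∑ e, G.Γ c a e x * X x e))
          + (∑ c, G.g x b c * (- ρ x * (if a = c then (1:ℝ) else 0)))
          + (∑ c, G.g x b c * (- σ x * ∑ e, G.ginv x c e * G.Schouten a e x)) := by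
      rw [← Finset.sum_add_distrib, ← Finset.sum_add_distrib]
      exact Finset.sum_congr rfl (fun c _ => by ring)
    rw [t1]
    have t2 : ∑ c, G.g x b c * (-∑ e, G.Γ c a e x * X x e)
        = -∑ c, ∑ e, G.g x b c * G.Γ c a e x * X x e := by
      rw [← Finset.sum_neg_distrib]
      apply Finset.sum_congr rfl; intro c _
      rw [mul_neg, Finset.mul_sum, neg_inj]
      exact Finset.sum_congr rfl (fun e _ => (mul_assoc _ _ _).symm)
    have t3 : ∑ c, G.g x b c * (- ρ x * (if a = c then (1:ℝ) else 0))
        = - ρ x * G.g x b a := by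
      rw [show (∑ c, G.g x b c * (- ρ x * (if a = c then (1:ℝ) else 0)))
        = ∑ c, (- ρ x * G.g x b c) * (if a = c then (1:ℝ) else 0) from
        Finset.sum_congr rfl (fun c _ => by ring)]
      rw [sum_delta_mul' a]
    have t4 : ∑ c, G.g x b c * (- σ x * ∑ e, G.ginv x c e * G.Schouten a e x)
        = - σ x * G.Schouten a b x := by
      have : ∀ c, G.g x b c * (- σ x * ∑ e, G.ginv x c e * G.Schouten a e x)
          = - σ x * ∑ e, G.g x b c * G.ginv x c e * G.Schouten a e x := by
        intro c; rw [Finset.mul_sum, Finset.mul_sum, Finset.mul_sum]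
        exact Finset.sum_congr rfl (fun e _ => by ring)
      rw [Finset.sum_congr rfl (fun c _ => this c), ← Finset.mul_sum]
      rw [Finset.sum_comm]
      have : ∀ e, ∑ c, G.g x b c * G.ginv x c e * G.Schouten a e x
          = (if b = e then (1:ℝ) else 0) * G.Schouten a e x := by
        intro e; rw [← Finset.sum_mul, G.mul_inv]
      rw [Finset.sum_congr rfl (fun e _ => this e), sum_delta' b]
    rw [t2, t3, t4]; ring
  -- metric compatibility part
  have e4 : ∑ c, pd a (fun y => G.g y b c) x * X x c
      = ∑ c, ∑ e, G.Γ e a b x * G.g x e c * X x c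
        + ∑ c, ∑ e, G.g x b c * G.Γ c a e x * X x e := by
    have expand : ∀ c, pd a (fun y => G.g y b c) x * X x c
        = (∑ e, G.Γ e a b x * G.g x e c) * X x c + (∑ e, G.Γ e a c x * G.g x e b) * X x c := by
      intro c
      rw [G.metric_compat a b c x]
      ring
    rw [Finset.sum_congr rfl (fun c _ => expand c), Finset.sum_add_distrib]
    congr 1
    · exact Finset.sum_congr rfl (fun c _ => by rw [Finset.sum_mul])
    · rw [Finset.sum_comm]
      apply Finset.sum_congr rfl; intro c _
      rw [Finset.sum_mul]
      apply Finset.sum_congr rfl; intro e _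
      rw [G.symm x b e]
      ring
  -- expand Γ ∇σ term
  have e5 : ∑ e, G.Γ e a b x * pd e σ x = ∑ e, ∑ c, G.Γ e a b x * G.g x e c * X x c := by
    apply Finset.sum_congr rfl; intro e _
    rw [h2 x e, Finset.mul_sum]
    exact Finset.sum_congr rfl (fun c _ => by ring)
  rw [e1, Finset.sum_add_distrib, e3, e4, e5]
  rw [Finset.sum_comm (f := fun c e => G.Γ e a b x * G.g x e c * X x c)]
  rw [G.symm x b a]
  ring

end Parts

variable {n : ℕ}

lemma sum_if_eq (a : Fin n) (f : Fin n → ℝ) :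
    ∑ c, (if a = c then (1:ℝ) else 0) * f c = f a := by simp [ite_mul]

lemma sum_if_eq' (a : Fin n) (f : Fin n → ℝ) :
    ∑ c, (if c = a then (1:ℝ) else 0) * f c = f a := by simp [ite_mul]

lemma Qcalc (b d : Fin n) (u v : Fin n → ℝ) (g : Fin n → Fin n → ℝ)
    (Γ0 : Fin n → Fin n → Fin n → ℝ)
    (hΓs : ∀ c a b', Γ0 c a b' = Γ0 c b' a)
    (hgs : ∀ a b', g a b' = g b' a)
    (hcon : ∀ e, ∑ c, g c e * v c = u e) :
    (∑ c, ∑ e,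
      ((Γ0 c c e + ((if c = c then (1:ℝ) else 0) * u e + (if e = c then 1 else 0) * u c - g c e * v c))
        * (Γ0 e b d + ((if b = e then 1 else 0) * u d + (if d = e then 1 else 0) * u b - g b d * v e))
      - (Γ0 c b e + ((if b = c then 1 else 0) * u e + (if e = c then 1 else 0) * u b - g b e * v c))
        * (Γ0 e c d + ((if c = e then 1 else 0) * u d + (if d = e then 1 else 0) * u c - g c d * v e))))
    = (∑ c, ∑ e, (Γ0 c c e * Γ0 e b d - Γ0 c b e * Γ0 e c d))
      + ((n:ℝ) - 2) * ∑ e, Γ0 e b d * u e + ((n:ℝ) - 2) * (u b * u d)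
      - g b d * (∑ e, (∑ c, Γ0 c c e) * v e)
      - ((n:ℝ) - 2) * (∑ e, u e * v e) * g b d
      + ∑ c, ∑ e, Γ0 c b e * g c d * v e + ∑ c, ∑ e, g b e * Γ0 e c d * v c := by
  have hcard : ((Finset.univ : Finset (Fin n)).card : ℝ) = (n : ℝ) := by simp
  have htrace : ∀ e, (∑ c, (Γ0 c c e + ((if c = c then (1:ℝ) else 0) * u e
      + (if e = c then 1 else 0) * u c - g c e * v c)))
      = (∑ c, Γ0 c c e) + (n:ℝ) * u e := by
    intro e
    have h1 : ∀ c : Fin n, (Γ0 c c e + ((if c = c then (1:ℝ) else 0) * u e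
        + (if e = c then 1 else 0) * u c - g c e * v c))
        = (Γ0 c c e + (if e = c then (1:ℝ) else 0) * u c) + (u e - g c e * v c) := by
      intro c; rw [if_pos rfl]; ring
    rw [Finset.sum_congr rfl (fun c _ => h1 c), Finset.sum_add_distrib,
      Finset.sum_add_distrib, Finset.sum_sub_distrib, sum_if_eq e u, hcon e,
      Finset.sum_const, nsmul_eq_mul, hcard]
    ring
  have hQ1 : (∑ c, ∑ e,
      ((Γ0 c c e + ((if c = c then (1:ℝ) else 0) * u e + (if e = c then 1 else 0) * u c - g c e * v c))
        * (Γ0 e b d + ((if b = e then 1 else 0) * u d + (if d = e then 1 else 0) * u b - g b d * v e))))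
      = (∑ e, (∑ c, Γ0 c c e) * Γ0 e b d) + (n:ℝ) * ∑ e, Γ0 e b d * u e
        + ((∑ c, Γ0 c c b) + (n:ℝ) * u b) * u d + ((∑ c, Γ0 c c d) + (n:ℝ) * u d) * u b
        - g b d * (∑ e, (∑ c, Γ0 c c e) * v e) - g b d * ((n:ℝ) * ∑ e, u e * v e) := by
    rw [Finset.sum_comm]
    have step1 : ∀ e, (∑ c,
        ((Γ0 c c e + ((if c = c then (1:ℝ) else 0) * u e + (if e = c then 1 else 0) * u c - g c e * v c))
          * (Γ0 e b d + ((if b = e then 1 else 0) * u d + (if d = e then 1 else 0) * u b - g b d * v e))))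
        = ((∑ c, Γ0 c c e) + (n:ℝ) * u e)
          * (Γ0 e b d + ((if b = e then 1 else 0) * u d + (if d = e then 1 else 0) * u b - g b d * v e)) := by
      intro e
      rw [← Finset.sum_mul, htrace e]
    rw [Finset.sum_congr rfl (fun e _ => step1 e)]
    have step2 : ∀ e, ((∑ c, Γ0 c c e) + (n:ℝ) * u e)
        * (Γ0 e b d + ((if b = e then 1 else 0) * u d + (if d = e then 1 else 0) * u b - g b d * v e))
        = (∑ c, Γ0 c c e) * Γ0 e b d + (n:ℝ) * (Γ0 e b d * u e)
          + (if b = e then 1 else 0) * (((∑ c, Γ0 c c e) + (n:ℝ) * u e) * u d)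
          + (if d = e then 1 else 0) * (((∑ c, Γ0 c c e) + (n:ℝ) * u e) * u b)
          - (g b d * ((∑ c, Γ0 c c e) * v e) + g b d * ((n:ℝ) * (u e * v e))) := by
      intro e; ring
    rw [Finset.sum_congr rfl (fun e _ => step2 e)]
    simp only [Finset.sum_sub_distrib, Finset.sum_add_distrib]
    rw [sum_if_eq b _, sum_if_eq d _]
    simp only [← Finset.mul_sum]
    ring
  have hQ2 : (∑ c, ∑ e,
      ((Γ0 c b e + ((if b = c then 1 else 0) * u e + (if e = c then (1:ℝ) else 0) * u b - g b e * v c))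
        * (Γ0 e c d + ((if c = e then 1 else 0) * u d + (if d = e then 1 else 0) * u c - g c d * v e))))
      = (∑ c, ∑ e, Γ0 c b e * Γ0 e c d)
        + (∑ c, Γ0 c c b) * u d + (∑ c, Γ0 c b d * u c) - (∑ c, ∑ e, Γ0 c b e * g c d * v e)
        + (∑ e, Γ0 e b d * u e) + u b * (∑ c, Γ0 c c d) - (∑ c, ∑ e, g b e * Γ0 e c d * v c)
        + ((n:ℝ) + 2) * (u b * u d) - 2 * (∑ e, u e * v e) * g b d := by
    have hexp : ∀ c e,
        ((Γ0 c b e + ((if b = c then 1 else 0) * u e + (if e = c then (1:ℝ) else 0) * u b - g b e * v c))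
          * (Γ0 e c d + ((if c = e then 1 else 0) * u d + (if d = e then 1 else 0) * u c - g c d * v e)))
        = Γ0 c b e * Γ0 e c d
          + (if c = e then (1:ℝ) else 0) * (Γ0 c b e * u d)
          + (if d = e then (1:ℝ) else 0) * (Γ0 c b e * u c)
          - Γ0 c b e * g c d * v e
          + (if b = c then (1:ℝ) else 0) * (u e * Γ0 e c d)
          + (if b = c then (1:ℝ) else 0) * ((if c = e then (1:ℝ) else 0) * (u e * u d))
          + (if b = c then (1:ℝ) else 0) * ((if d = e then (1:ℝ) else 0) * (u e * u c))
          - (if b = c then (1:ℝ) else 0) * (u e * (g c d * v e))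
          + (if e = c then (1:ℝ) else 0) * (u b * Γ0 e c d)
          + (if e = c then (1:ℝ) else 0) * ((if c = e then (1:ℝ) else 0) * (u b * u d))
          + (if e = c then (1:ℝ) else 0) * ((if d = e then (1:ℝ) else 0) * (u b * u c))
          - (if e = c then (1:ℝ) else 0) * (u b * (g c d * v e))
          - g b e * Γ0 e c d * v c
          - (if c = e then (1:ℝ) else 0) * (g b e * v c * u d)
          - (if d = e then (1:ℝ) else 0) * (g b e * v c * u c)
          + g b e * v c * (g c d * v e) := by
      intro c e; ring
    rw [Finset.sum_congr rfl (fun c _ => Finset.sum_congr rfl (fun e _ => hexp c e))]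
    simp only [Finset.sum_add_distrib, Finset.sum_sub_distrib]
    have c2 : ∑ c, ∑ e, (if c = e then (1:ℝ) else 0) * (Γ0 c b e * u d)
        = (∑ c, Γ0 c c b) * u d := by
      rw [Finset.sum_congr rfl (fun c _ => sum_if_eq c (fun e => Γ0 c b e * u d))]
      rw [Finset.sum_mul]
      exact Finset.sum_congr rfl (fun c _ => by rw [hΓs c b c])
    have c3 : ∑ c, ∑ e, (if d = e then (1:ℝ) else 0) * (Γ0 c b e * u c)
        = ∑ c, Γ0 c b d * u c :=
      Finset.sum_congr rfl (fun c _ => sum_if_eq d (fun e => Γ0 c b e * u c))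
    have c5 : ∑ c, ∑ e, (if b = c then (1:ℝ) else 0) * (u e * Γ0 e c d)
        = ∑ e, Γ0 e b d * u e := by
      rw [Finset.sum_comm]
      apply Finset.sum_congr rfl; intro e _
      rw [sum_if_eq b (fun c => u e * Γ0 e c d)]
      ring
    have c6 : ∑ c, ∑ e, (if b = c then (1:ℝ) else 0) * ((if c = e then (1:ℝ) else 0) * (u e * u d))
        = u b * u d := by
      have inner : ∀ c : Fin n, ∑ e, (if b = c then (1:ℝ) else 0) * ((if c = e then (1:ℝ) else 0) * (u e * u d))
          = (if b = c then (1:ℝ) else 0) * (u c * u d) := by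
        intro c; rw [← Finset.mul_sum, sum_if_eq c (fun e => u e * u d)]
      rw [Finset.sum_congr rfl (fun c _ => inner c), sum_if_eq b (fun c => u c * u d)]
    have c7 : ∑ c, ∑ e, (if b = c then (1:ℝ) else 0) * ((if d = e then (1:ℝ) else 0) * (u e * u c))
        = u d * u b := by
      have inner : ∀ c : Fin n, ∑ e, (if b = c then (1:ℝ) else 0) * ((if d = e then (1:ℝ) else 0) * (u e * u c))
          = (if b = c then (1:ℝ) else 0) * (u d * u c) := by
        intro c; rw [← Finset.mul_sum, sum_if_eq d (fun e => u e * u c)]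
      rw [Finset.sum_congr rfl (fun c _ => inner c), sum_if_eq b (fun c => u d * u c)]
    have c8 : ∑ c, ∑ e, (if b = c then (1:ℝ) else 0) * (u e * (g c d * v e))
        = g b d * ∑ e, u e * v e := by
      have inner : ∀ c : Fin n, ∑ e, (if b = c then (1:ℝ) else 0) * (u e * (g c d * v e))
          = (if b = c then (1:ℝ) else 0) * (g c d * ∑ e, u e * v e) := by
        intro c
        rw [← Finset.mul_sum]
        have : ∑ e, u e * (g c d * v e) = g c d * ∑ e, u e * v e := by
          rw [Finset.mul_sum]; exact Finset.sum_congr rfl (fun e _ => by ring)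
        rw [this]
      rw [Finset.sum_congr rfl (fun c _ => inner c), sum_if_eq b (fun c => g c d * ∑ e, u e * v e)]
    have c9 : ∑ c : Fin n, ∑ e : Fin n, (if e = c then (1:ℝ) else 0) * (u b * Γ0 e c d)
        = u b * (∑ c, Γ0 c c d) := by
      rw [Finset.sum_congr rfl (fun c _ => sum_if_eq' c (fun e => u b * Γ0 e c d))]
      rw [Finset.mul_sum]
    have c10 : ∑ c : Fin n, ∑ e : Fin n, (if e = c then (1:ℝ) else 0) * ((if c = e then (1:ℝ) else 0) * (u b * u d))
        = (n:ℝ) * (u b * u d) := by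
      have inner : ∀ c : Fin n, ∑ e, (if e = c then (1:ℝ) else 0) * ((if c = e then (1:ℝ) else 0) * (u b * u d))
          = u b * u d := by
        intro c
        rw [sum_if_eq' c (fun e => (if c = e then (1:ℝ) else 0) * (u b * u d))]
        rw [if_pos rfl, one_mul]
      rw [Finset.sum_congr rfl (fun c _ => inner c), Finset.sum_const, nsmul_eq_mul, hcard]
    have c11 : ∑ c : Fin n, ∑ e : Fin n, (if e = c then (1:ℝ) else 0) * ((if d = e then (1:ℝ) else 0) * (u b * u c))
        = u b * u d := by
      rw [Finset.sum_congr rfl (fun c _ => sum_if_eq' c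
        (fun e => (if d = e then (1:ℝ) else 0) * (u b * u c)))]
      rw [sum_if_eq d (fun c => u b * u c)]
    have c12 : ∑ c : Fin n, ∑ e : Fin n, (if e = c then (1:ℝ) else 0) * (u b * (g c d * v e))
        = u b * u d := by
      rw [Finset.sum_congr rfl (fun c _ => sum_if_eq' c (fun e => u b * (g c d * v e)))]
      have : ∀ c : Fin n, u b * (g c d * v c) = u b * (g c d * v c) := fun c => rfl
      rw [show (∑ c, u b * (g c d * v c)) = u b * ∑ c, g c d * v c from (Finset.mul_sum _ _ _).symm]
      rw [hcon d]
    have c14 : ∑ c, ∑ e, (if c = e then (1:ℝ) else 0) * (g b e * v c * u d)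
        = u b * u d := by
      rw [Finset.sum_congr rfl (fun c _ => sum_if_eq c (fun e => g b e * v c * u d))]
      have : ∑ c, g b c * v c * u d = (∑ c, g c b * v c) * u d := by
        rw [Finset.sum_mul]
        exact Finset.sum_congr rfl (fun c _ => by rw [hgs b c])
      rw [this, hcon b]
    have c15 : ∑ c, ∑ e, (if d = e then (1:ℝ) else 0) * (g b e * v c * u c)
        = (∑ e, u e * v e) * g b d := by
      rw [Finset.sum_congr rfl (fun c _ => sum_if_eq d (fun e => g b e * v c * u c))]
      rw [Finset.sum_congr rfl (fun c (_ : c ∈ Finset.univ) =>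
        show g b d * v c * u c = (u c * v c) * g b d by ring)]
      rw [← Finset.sum_mul]
    have c16 : ∑ c, ∑ e, g b e * v c * (g c d * v e)
        = u b * u d := by
      have inner : ∀ c : Fin n, ∑ e, g b e * v c * (g c d * v e)
          = (g c d * v c) * ∑ e, g e b * v e := by
        intro c
        rw [Finset.mul_sum]
        exact Finset.sum_congr rfl (fun e _ => by rw [hgs b e]; ring)
      rw [Finset.sum_congr rfl (fun c _ => inner c)]
      rw [Finset.sum_congr rfl (fun c (_ : c ∈ Finset.univ) => by rw [hcon b])]
      rw [← Finset.sum_mul, hcon d]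
      ring
    rw [c2, c3, c5, c6, c7, c8, c9, c10, c11, c12, c14, c15, c16]
    ring
  have hsplit : (∑ c, ∑ e, (Γ0 c c e * Γ0 e b d - Γ0 c b e * Γ0 e c d))
      = (∑ e, (∑ c, Γ0 c c e) * Γ0 e b d) - ∑ c, ∑ e, Γ0 c b e * Γ0 e c d := by
    rw [Finset.sum_congr rfl (fun c (_ : c ∈ Finset.univ) => Finset.sum_sub_distrib _ _),
      Finset.sum_sub_distrib]
    congr 1
    rw [Finset.sum_comm]
    exact Finset.sum_congr rfl (fun e _ => (Finset.sum_mul _ _ _).symm)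
  rw [Finset.sum_congr rfl (fun c (_ : c ∈ Finset.univ) => Finset.sum_sub_distrib _ _),
    Finset.sum_sub_distrib, hQ1, hQ2, hsplit]
  ring
section Conformal
open PDAPI MetricG
variable {n : ℕ}

/-- the one-form Υ = d(-log σ) -/
def Ups (σ : Pt n → ℝ) (y : Pt n) (e : Fin n) : ℝ := -(σ y)⁻¹ * pd e σ y

/-- the raised-index version V^c = g^{ce} Υ_e -/
def Vf (G : MetricG n) (σ : Pt n → ℝ) (y : Pt n) (c : Fin n) : ℝ :=
  ∑ e, G.ginv y c e * Ups σ y e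

/-- the Einstein scale factor -/
def Esc (G : MetricG n) (ρ σ : Pt n → ℝ) (x : Pt n) : ℝ :=
  G.Scal x / (2 * ((n:ℝ) - 1)) + (2 - (n:ℝ)) * (ρ x * (σ x)⁻¹)
    - ((n:ℝ) - 2) * (∑ e, Ups σ x e * Vf G σ x e)
    - ((∑ c, pd c (fun y => Vf G σ y c) x) + ∑ e, (∑ c, G.Γ c c e x) * Vf G σ x e)

variable (G : MetricG n) (σ : Pt n → ℝ)

lemma diff_Ups (hσ : ContDiff ℝ (⊤ : ℕ∞) σ) {y : Pt n} (h0 : σ y ≠ 0) (e : Fin n) :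
    DifferentiableAt ℝ (fun z => Ups σ z e) y := by
  unfold Ups
  exact (((hσ.differentiable (by simp) y).inv h0).neg).mul
    ((contDiff_pd hσ).differentiable (by simp) y)

lemma diff_Vf (hσ : ContDiff ℝ (⊤ : ℕ∞) σ) {y : Pt n} (h0 : σ y ≠ 0) (c : Fin n) :
    DifferentiableAt ℝ (fun z => Vf G σ z c) y := by
  unfold Vf
  exact DifferentiableAt.fun_sum (fun e _ => (G.diff_ginv c e y).mul (diff_Ups σ hσ h0 e))

/-- contraction: g_{ce} V^c = Υ_e (pure algebra, holds everywhere) -/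
lemma gV_contract (y : Pt n) (e : Fin n) :
    ∑ c, G.g y c e * Vf G σ y c = Ups σ y e := by
  unfold Vf
  have step : ∀ c, G.g y c e * ∑ f, G.ginv y c f * Ups σ y f
      = ∑ f, G.g y e c * G.ginv y c f * Ups σ y f := by
    intro c
    rw [Finset.mul_sum, G.symm y c e]
    exact Finset.sum_congr rfl (fun f _ => by ring)
  rw [Finset.sum_congr rfl (fun c _ => step c), Finset.sum_comm]
  have inner : ∀ f, ∑ c, G.g y e c * G.ginv y c f * Ups σ y f
      = (if e = f then (1:ℝ) else 0) * Ups σ y f := by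
    intro f
    rw [← Finset.sum_mul, G.mul_inv]
  rw [Finset.sum_congr rfl (fun f _ => inner f), sum_delta' e]

variable (Ghat : MetricG n)
variable (hconf : ∀ x, σ x ≠ 0 → ∀ a b, Ghat.g x a b = ((σ x) ^ 2)⁻¹ * G.g x a b)

/-- the inverse of the conformal metric -/
lemma hat_ginv (hconf : ∀ x, σ x ≠ 0 → ∀ a b, Ghat.g x a b = ((σ x) ^ 2)⁻¹ * G.g x a b)
    {y : Pt n} (h0 : σ y ≠ 0) (a b : Fin n) :
    Ghat.ginv y a b = (σ y) ^ 2 * G.ginv y a b := by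
  have h2 : (σ y) ^ 2 ≠ 0 := pow_ne_zero 2 h0
  apply Ghat.ginv_unique y (fun a b => (σ y) ^ 2 * G.ginv y a b)
  intro a c
  have hterm : ∀ b', (σ y) ^ 2 * G.ginv y a b' * Ghat.g y b' c
      = G.ginv y a b' * G.g y b' c := by
    intro b'
    rw [hconf y h0 b' c]
    field_simp
  rw [Finset.sum_congr rfl (fun b' _ => hterm b')]
  exact G.inv_mul y a c

/-- derivative of the conformal factor -/
lemma pd_conf_factor (hσ : ContDiff ℝ (⊤ : ℕ∞) σ) {y : Pt n} (h0 : σ y ≠ 0) (a : Fin n) :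
    pd a (fun z => ((σ z) ^ 2)⁻¹) y = 2 * Ups σ y a * ((σ y) ^ 2)⁻¹ := by
  have hd : DifferentiableAt ℝ σ y := hσ.differentiable (by simp) y
  have hd2 : DifferentiableAt ℝ (fun z => (σ z) ^ 2) y := hd.pow 2
  have h2 : (σ y) ^ 2 ≠ 0 := pow_ne_zero 2 h0
  have e1 : pd a (fun z => (σ z) ^ 2) y = 2 * σ y * pd a σ y := by
    have : (fun z => (σ z) ^ 2) = (fun z => σ z * σ z) := by funext z; ring
    rw [this, pd_mul hd hd]
    ring
  rw [pd_inv hd2 h2, e1]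
  unfold Ups
  field_simp

/-- the conformal Christoffel symbols -/
lemma hatΓ (hσ : ContDiff ℝ (⊤ : ℕ∞) σ)
    (hconf : ∀ x, σ x ≠ 0 → ∀ a b, Ghat.g x a b = ((σ x) ^ 2)⁻¹ * G.g x a b)
    {y : Pt n} (h0 : σ y ≠ 0) (c a b : Fin n) :
    Ghat.Γ c a b y = G.Γ c a b y
      + ((if a = c then (1:ℝ) else 0) * Ups σ y b + (if b = c then (1:ℝ) else 0) * Ups σ y a
        - G.g y a b * Vf G σ y c) := by
  have hev : ∀ᶠ z in nhds y, σ z ≠ 0 :=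
    (hσ.continuous.continuousAt).eventually_ne h0
  have h2 : (σ y) ^ 2 ≠ 0 := pow_ne_zero 2 h0
  -- derivative of hat g
  have pdhat : ∀ (e p q : Fin n), pd e (fun z => Ghat.g z p q) y
      = ((σ y) ^ 2)⁻¹ * (2 * Ups σ y e * G.g y p q + pd e (fun z => G.g z p q) y) := by
    intro e p q
    have heq : (fun z => Ghat.g z p q) =ᶠ[nhds y] (fun z => ((σ z) ^ 2)⁻¹ * G.g z p q) :=
      hev.mono (fun z hz => hconf z hz p q)
    rw [pd_congr heq]
    rw [pd_mul (f := fun z => ((σ z) ^ 2)⁻¹) (g := fun z => G.g z p q) (((hσ.differentiable (by simp) y).pow 2).inv h2) (G.diff_g p q y)]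
    rw [pd_conf_factor σ hσ h0 e]
    ring
  unfold MetricG.Γ
  have step : ∀ d, Ghat.ginv y c d *
      (pd a (fun z => Ghat.g z d b) y + pd b (fun z => Ghat.g z d a) y
        - pd d (fun z => Ghat.g z a b) y)
      = G.ginv y c d *
        (pd a (fun z => G.g z d b) y + pd b (fun z => G.g z d a) y - pd d (fun z => G.g z a b) y)
        + (2 * (G.ginv y c d * (Ups σ y a * G.g y d b)) + 2 * (G.ginv y c d * (Ups σ y b * G.g y d a))
          - 2 * (G.ginv y c d * (Ups σ y d * G.g y a b))) := by
    intro d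
    rw [hat_ginv G σ Ghat hconf h0 c d, pdhat a d b, pdhat b d a, pdhat d a b]
    field_simp
    ring
  rw [Finset.sum_congr rfl (fun d _ => step d)]
  rw [Finset.sum_add_distrib, mul_add]
  congr 1
  rw [Finset.sum_sub_distrib, Finset.sum_add_distrib,
    ← Finset.mul_sum, ← Finset.mul_sum, ← Finset.mul_sum]
  -- contractions
  have k1 : ∑ d, G.ginv y c d * (Ups σ y a * G.g y d b) = (if b = c then (1:ℝ) else 0) * Ups σ y a := by
    have : ∀ d, G.ginv y c d * (Ups σ y a * G.g y d b) = G.ginv y c d * G.g y d b * Ups σ y a := by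
      intro d; ring
    rw [Finset.sum_congr rfl (fun d _ => this d), ← Finset.sum_mul, G.inv_mul y c b]
    by_cases h : c = b <;> simp [h, eq_comm]
  have k2 : ∑ d, G.ginv y c d * (Ups σ y b * G.g y d a) = (if a = c then (1:ℝ) else 0) * Ups σ y b := by
    have : ∀ d, G.ginv y c d * (Ups σ y b * G.g y d a) = G.ginv y c d * G.g y d a * Ups σ y b := by
      intro d; ring
    rw [Finset.sum_congr rfl (fun d _ => this d), ← Finset.sum_mul, G.inv_mul y c a]
    by_cases h : c = a <;> simp [h, eq_comm]
  have k3 : ∑ d, G.ginv y c d * (Ups σ y d * G.g y a b) = G.g y a b * Vf G σ y c := by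
    unfold Vf
    rw [Finset.mul_sum]
    exact Finset.sum_congr rfl (fun d _ => by ring)
  rw [k1, k2, k3]
  ring

end Conformal
section Conformal2
open PDAPI MetricG
variable {n : ℕ} (G : MetricG n) (σ ρ : Pt n → ℝ) (Ghat : MetricG n)

/-- derivative of the conformal Christoffel symbols -/
lemma pd_hatΓ (hσ : ContDiff ℝ (⊤ : ℕ∞) σ)
    (hconf : ∀ x, σ x ≠ 0 → ∀ a b, Ghat.g x a b = ((σ x) ^ 2)⁻¹ * G.g x a b)
    {x : Pt n} (h0 : σ x ≠ 0) (e c a b : Fin n) :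
    pd e (fun y => Ghat.Γ c a b y) x
      = pd e (fun y => G.Γ c a b y) x
        + (if a = c then (1:ℝ) else 0) * pd e (fun y => Ups σ y b) x
        + (if b = c then (1:ℝ) else 0) * pd e (fun y => Ups σ y a) x
        - (pd e (fun y => G.g y a b) x * Vf G σ x c
            + G.g x a b * pd e (fun y => Vf G σ y c) x) := by
  have hev : ∀ᶠ z in nhds x, σ z ≠ 0 := (hσ.continuous.continuousAt).eventually_ne h0
  have heq : (fun y => Ghat.Γ c a b y) =ᶠ[nhds x]
      (fun y => G.Γ c a b y + ((if a = c then (1:ℝ) else 0) * Ups σ y b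
        + (if b = c then (1:ℝ) else 0) * Ups σ y a - G.g y a b * Vf G σ y c)) :=
    hev.mono (fun z hz => hatΓ G σ Ghat hσ hconf hz c a b)
  rw [pd_congr heq]
  have d1 : DifferentiableAt ℝ (fun y => (if a = c then (1:ℝ) else 0) * Ups σ y b) x :=
    (diff_Ups σ hσ h0 b).const_mul _
  have d2 : DifferentiableAt ℝ (fun y => (if b = c then (1:ℝ) else 0) * Ups σ y a) x :=
    (diff_Ups σ hσ h0 a).const_mul _
  have d3 : DifferentiableAt ℝ (fun y => G.g y a b * Vf G σ y c) x :=
    (G.diff_g a b x).mul (diff_Vf G σ hσ h0 c)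
  rw [pd_add (G.diff_Γ c a b x) (((d1.fun_add d2).fun_sub d3))]
  rw [pd_sub (d1.fun_add d2) d3, pd_add d1 d2]
  rw [pd_const_mul _ (diff_Ups σ hσ h0 b), pd_const_mul _ (diff_Ups σ hσ h0 a)]
  rw [pd_mul (G.diff_g a b x) (diff_Vf G σ hσ h0 c)]
  ring

/-- derivative of Υ in terms of the Schouten tensor, using the parallel tractor eqn -/
lemma dU_formula (hσ : ContDiff ℝ (⊤ : ℕ∞) σ)
    (hpt2 : ∀ x a b, (pd a (fun y => pd b σ y) x - ∑ e, G.Γ e a b x * pd e σ x)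
        + σ x * G.Schouten a b x + ρ x * G.g x a b = 0)
    {x : Pt n} (h0 : σ x ≠ 0) (e b : Fin n) :
    pd e (fun y => Ups σ y b) x
      = Ups σ x e * Ups σ x b + (∑ c, G.Γ c e b x * Ups σ x c)
        + G.Schouten e b x + (ρ x * (σ x)⁻¹) * G.g x e b := by
  have hd : DifferentiableAt ℝ σ x := hσ.differentiable (by simp) x
  have hdp : DifferentiableAt ℝ (pd b σ) x := (contDiff_pd hσ).differentiable (by simp) x
  have hdi : DifferentiableAt ℝ (fun y => -(σ y)⁻¹) x := (hd.inv h0).neg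
  have e0 : pd e (fun y => Ups σ y b) x
      = pd e (fun y => -(σ y)⁻¹) x * pd b σ x + (-(σ x)⁻¹) * pd e (fun y => pd b σ y) x := by
    unfold Ups
    exact pd_mul hdi hdp
  have e1 : pd e (fun y => -(σ y)⁻¹) x = pd e σ x / (σ x)^2 := by
    rw [show (fun y => -(σ y)⁻¹) = (fun y => -((fun z => (σ z)⁻¹) y)) from rfl]
    rw [pd_neg, pd_inv hd h0]
    ring
  have e2 : pd e (fun y => pd b σ y) x
      = ∑ c, G.Γ c e b x * pd c σ x - σ x * G.Schouten e b x - ρ x * G.g x e b := by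
    have := hpt2 x e b
    linarith [this]
  have e3 : ∀ c, pd c σ x = -(σ x) * Ups σ x c := by
    intro c
    unfold Ups
    field_simp
  rw [e0, e1, e2]
  rw [Finset.sum_congr rfl (fun c (_ : c ∈ Finset.univ) => by rw [e3 c])]
  have e4 : ∑ c, G.Γ c e b x * (-(σ x) * Ups σ x c)
      = -(σ x) * ∑ c, G.Γ c e b x * Ups σ x c := by
    rw [Finset.mul_sum]
    exact Finset.sum_congr rfl (fun c _ => by ring)
  rw [e4, e3 e, e3 b]
  field_simp
  ring

/-- differentiated contraction identity -/
lemma R1d (hσ : ContDiff ℝ (⊤ : ℕ∞) σ) {x : Pt n} (h0 : σ x ≠ 0) (b d : Fin n) :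
    ∑ c, (pd b (fun y => G.g y c d) x * Vf G σ x c + G.g x c d * pd b (fun y => Vf G σ y c) x)
      = pd b (fun y => Ups σ y d) x := by
  have heq : (fun y => ∑ c, G.g y c d * Vf G σ y c) = (fun y => Ups σ y d) :=
    funext (fun y => gV_contract G σ y d)
  have hdiff : ∀ c, DifferentiableAt ℝ (fun y => G.g y c d * Vf G σ y c) x :=
    fun c => (G.diff_g c d x).mul (diff_Vf G σ hσ h0 c)
  calc ∑ c, (pd b (fun y => G.g y c d) x * Vf G σ x c + G.g x c d * pd b (fun y => Vf G σ y c) x)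
      = ∑ c, pd b (fun y => G.g y c d * Vf G σ y c) x :=
        Finset.sum_congr rfl (fun c _ => (pd_mul (G.diff_g c d x) (diff_Vf G σ hσ h0 c)).symm)
    _ = pd b (fun y => ∑ c, G.g y c d * Vf G σ y c) x := (pd_sum _ _ (fun c _ => hdiff c)).symm
    _ = pd b (fun y => Ups σ y d) x := by rw [heq]

lemma schouten_symm (x : Pt n) (a b : Fin n) : G.Schouten a b x = G.Schouten b a x := by
  unfold MetricG.Schouten
  rw [G.ricci_symm a b x, G.symm x a b]

lemma ricci_schouten (hn2 : ((n:ℝ) - 2) ≠ 0) (x : Pt n) (b d : Fin n) :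
    ((n:ℝ) - 2) * G.Schouten b d x
      = G.Ricci b d x - G.Scal x / (2 * ((n:ℝ) - 1)) * G.g x b d := by
  unfold MetricG.Schouten
  field_simp

/-- the lowered-Christoffel cancellation -/
lemma X12 (x : Pt n) (b d : Fin n) :
    (∑ c, ∑ e, G.Γ c b e x * G.g x c d * Vf G σ x e)
      + (∑ c, ∑ e, G.g x b e * G.Γ e c d x * Vf G σ x c)
      = ∑ c, pd c (fun y => G.g y b d) x * Vf G σ x c := by
  have hX1 : (∑ c, ∑ e, G.Γ c b e x * G.g x c d * Vf G σ x e)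
      = ∑ c, (1/2) * (pd b (fun y => G.g y d c) x + pd c (fun y => G.g y d b) x
          - pd d (fun y => G.g y b c) x) * Vf G σ x c := by
    rw [Finset.sum_comm]
    apply Finset.sum_congr rfl; intro e _
    have : ∀ c, G.Γ c b e x * G.g x c d * Vf G σ x e
        = G.g x d c * G.Γ c b e x * Vf G σ x e := by
      intro c; rw [G.symm x d c]; ring
    rw [Finset.sum_congr rfl (fun c _ => this c), ← Finset.sum_mul, G.lowerΓ d b e x]
  have hX2 : (∑ c, ∑ e, G.g x b e * G.Γ e c d x * Vf G σ x c)
      = ∑ c, (1/2) * (pd c (fun y => G.g y b d) x + pd d (fun y => G.g y b c) x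
          - pd b (fun y => G.g y c d) x) * Vf G σ x c := by
    apply Finset.sum_congr rfl; intro c _
    have : ∀ e, G.g x b e * G.Γ e c d x * Vf G σ x c
        = G.g x b e * G.Γ e c d x * Vf G σ x c := fun e => rfl
    rw [show (∑ e, G.g x b e * G.Γ e c d x * Vf G σ x c)
        = (∑ e, G.g x b e * G.Γ e c d x) * Vf G σ x c from (Finset.sum_mul _ _ _).symm]
    rw [G.lowerΓ b c d x]
  rw [hX1, hX2, ← Finset.sum_add_distrib]
  apply Finset.sum_congr rfl; intro c _
  rw [G.pdg_symm b c d x, G.pdg_symm c b d x]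
  ring

end Conformal2
section Assembly
open PDAPI MetricG
variable {n : ℕ}

lemma ricci_decomp (M : MetricG n) (x : Pt n) (b d : Fin n) :
    M.Ricci b d x = (∑ c, pd c (fun y => M.Γ c b d y) x)
      - (∑ c, pd b (fun y => M.Γ c c d y) x)
      + ∑ c, ∑ e, (M.Γ c c e x * M.Γ e b d x - M.Γ c b e x * M.Γ e c d x) := by
  unfold MetricG.Ricci MetricG.Riem
  rw [Finset.sum_add_distrib, Finset.sum_sub_distrib]

lemma ricci_hat (hn : 3 ≤ n) (G Ghat : MetricG n) (ρ σ : Pt n → ℝ)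
    (hσ : ContDiff ℝ (⊤ : ℕ∞) σ)
    (hconf : ∀ x, σ x ≠ 0 → ∀ a b, Ghat.g x a b = ((σ x) ^ 2)⁻¹ * G.g x a b)
    (hpt2 : ∀ x a b, (pd a (fun y => pd b σ y) x - ∑ e, G.Γ e a b x * pd e σ x)
        + σ x * G.Schouten a b x + ρ x * G.g x a b = 0)
    {x : Pt n} (h0 : σ x ≠ 0) (b d : Fin n) :
    Ghat.Ricci b d x = Esc G ρ σ x * G.g x b d := by
  have hn2 : ((n:ℝ) - 2) ≠ 0 := by
    have : (3:ℝ) ≤ (n:ℝ) := by exact_mod_cast hn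
    intro h; linarith
  have hcard : ((Finset.univ : Finset (Fin n)).card : ℝ) = (n : ℝ) := by simp
  -- T1
  have hT1 : ∑ c, pd c (fun y => Ghat.Γ c b d y) x
      = (∑ c, pd c (fun y => G.Γ c b d y) x)
        + pd b (fun y => Ups σ y d) x + pd d (fun y => Ups σ y b) x
        - ∑ c, pd c (fun y => G.g y b d) x * Vf G σ x c
        - G.g x b d * ∑ c, pd c (fun y => Vf G σ y c) x := by
    rw [Finset.sum_congr rfl (fun c _ => pd_hatΓ G σ Ghat hσ hconf h0 c c b d)]
    simp only [Finset.sum_sub_distrib, Finset.sum_add_distrib]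
    rw [sum_if_eq b (fun c => pd c (fun y => Ups σ y d) x),
      sum_if_eq d (fun c => pd c (fun y => Ups σ y b) x), ← Finset.mul_sum]
    ring
  -- T2
  have hT2 : ∑ c, pd b (fun y => Ghat.Γ c c d y) x
      = (∑ c, pd b (fun y => G.Γ c c d y) x) + (n:ℝ) * pd b (fun y => Ups σ y d) x := by
    rw [Finset.sum_congr rfl (fun c _ => pd_hatΓ G σ Ghat hσ hconf h0 b c c d)]
    have step : ∀ c : Fin n, pd b (fun y => G.Γ c c d y) x
        + (if c = c then (1:ℝ) else 0) * pd b (fun y => Ups σ y d) x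
        + (if d = c then (1:ℝ) else 0) * pd b (fun y => Ups σ y c) x
        - (pd b (fun y => G.g y c d) x * Vf G σ x c
            + G.g x c d * pd b (fun y => Vf G σ y c) x)
        = pd b (fun y => G.Γ c c d y) x
          + pd b (fun y => Ups σ y d) x
          + (if d = c then (1:ℝ) else 0) * pd b (fun y => Ups σ y c) x
          - (pd b (fun y => G.g y c d) x * Vf G σ x c
              + G.g x c d * pd b (fun y => Vf G σ y c) x) := by
      intro c; rw [if_pos rfl, one_mul]
    rw [Finset.sum_congr rfl (fun c _ => step c)]
    simp only [Finset.sum_sub_distrib, Finset.sum_add_distrib]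
    have hR := R1d G σ hσ h0 b d
    rw [Finset.sum_add_distrib] at hR
    rw [sum_if_eq d (fun c => pd b (fun y => Ups σ y c) x),
      Finset.sum_const, nsmul_eq_mul, hcard]
    linear_combination -hR
  -- quadratic terms
  have hQ : ∑ c, ∑ e, (Ghat.Γ c c e x * Ghat.Γ e b d x - Ghat.Γ c b e x * Ghat.Γ e c d x)
      = (∑ c, ∑ e, (G.Γ c c e x * G.Γ e b d x - G.Γ c b e x * G.Γ e c d x))
        + ((n:ℝ) - 2) * ∑ e, G.Γ e b d x * Ups σ x e
        + ((n:ℝ) - 2) * (Ups σ x b * Ups σ x d)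
        - G.g x b d * (∑ e, (∑ c, G.Γ c c e x) * Vf G σ x e)
        - ((n:ℝ) - 2) * (∑ e, Ups σ x e * Vf G σ x e) * G.g x b d
        + ∑ c, ∑ e, G.Γ c b e x * G.g x c d * Vf G σ x e
        + ∑ c, ∑ e, G.g x b e * G.Γ e c d x * Vf G σ x c := by
    rw [Finset.sum_congr rfl (fun c _ => Finset.sum_congr rfl (fun e _ => by
      rw [hatΓ G σ Ghat hσ hconf h0 c c e, hatΓ G σ Ghat hσ hconf h0 e b d,
        hatΓ G σ Ghat hσ hconf h0 c b e, hatΓ G σ Ghat hσ hconf h0 e c d]))]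
    exact Qcalc b d (Ups σ x) (Vf G σ x) (G.g x) (fun c a b' => G.Γ c a b' x)
      (fun c a b' => G.Γ_symm c a b' x) (G.symm x) (fun e => gV_contract G σ x e)
  -- the pieces
  have h1 := dU_formula G σ ρ hσ hpt2 h0 b d
  have h2 := dU_formula G σ ρ hσ hpt2 h0 d b
  have h3 : ∑ c, G.Γ c d b x * Ups σ x c = ∑ c, G.Γ c b d x * Ups σ x c :=
    Finset.sum_congr rfl (fun c _ => by rw [G.Γ_symm c d b x])
  have h4 : G.Schouten d b x = G.Schouten b d x := schouten_symm G x d b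
  have h5 : G.g x d b = G.g x b d := G.symm x d b
  have h6 := X12 G σ x b d
  have h7 := ricci_decomp G x b d
  have h8 := ricci_schouten G hn2 x b d
  rw [ricci_decomp Ghat x b d, hT1, hT2, hQ]
  unfold Esc
  linear_combination ((1:ℝ) - (n:ℝ)) * h1 + h2 + h3 + h4 + (ρ x * (σ x)⁻¹) * h5
    + h6 - h7 - h8

end Assembly
/-- A ∇̄-parallel standard tractor (ρ, X^b, σ) satisfies X^b = ∇^bσ and
∇_a∇_bσ + σP_{ab} + ρg_{ab} = 0; consequently, on the open set where σ ≠ 0, the metric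
σ^{−2}g is Einstein. -/
theorem stmt_18 {n : ℕ} (hn : 3 ≤ n) (G : MetricG n)
    (ρ σ : Pt n → ℝ) (X : Pt n → Pt n)
    (hρ : ContDiff ℝ (⊤ : ℕ∞) ρ) (hσ : ContDiff ℝ (⊤ : ℕ∞) σ) (hX : SmoothVF X)
    (hpar : ∀ x a, G.trD0 ρ X a x = 0 ∧ (∀ b, G.trD1 ρ X σ a b x = 0) ∧
      G.trD2 X σ a x = 0) :
    (∀ x b, X x b = ∑ a, G.ginv x b a * pd a σ x) ∧
      (∀ x a b, (pd a (fun y => pd b σ y) x - ∑ e, G.Γ e a b x * pd e σ x)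
          + σ x * G.Schouten a b x + ρ x * G.g x a b = 0) ∧
      ∀ Ghat : MetricG n,
        (∀ x, σ x ≠ 0 → ∀ a b, Ghat.g x a b = ((σ x) ^ 2)⁻¹ * G.g x a b) →
        ∃ Λ : Pt n → ℝ, ∀ x, σ x ≠ 0 → ∀ a b, Ghat.Ricci a b x = Λ x * Ghat.g x a b := by
  have htr1 : ∀ x a b, G.trD1 ρ X σ a b x = 0 := fun x a b => (hpar x a).2.1 b
  have htr2 : ∀ x a, G.trD2 X σ a x = 0 := fun x a => (hpar x a).2.2
  have hpt2 := part2_aux G ρ σ X hσ hX htr1 htr2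
  refine ⟨part1_aux G σ X htr2, hpt2, ?_⟩
  intro Ghat hconf
  refine ⟨fun x => (σ x) ^ 2 * Esc G ρ σ x, ?_⟩
  intro x h0 a b
  have hric := ricci_hat hn G Ghat ρ σ hσ hconf hpt2 h0 a b
  rw [hric, hconf x h0 a b]
  have h2 : (σ x) ^ 2 ≠ 0 := pow_ne_zero 2 h0
  field_simp
end
end

section
/- (Trace adjustment of the second fundamental form) Let K span a null line bundle L ⊂ TM with integrable orthogonal distribution L^⊥, and let Π_{ab} := g_{cb}∇_aK^c restricted to L^⊥ × L^⊥ with trace H. Under a conformal change ĝ = e^{2Υ}g, the trace transforms as Ĥ = e^{2Υ}(H + (n−2)K^aΥ_a); hence any metric ĝ in the conformal class with K^a∇_aΥ = −H/(n−2) satisfies Ĥ = 0. -/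
/- A coordinate-chart framework for pseudo-Riemannian geometry on ℝⁿ:
metric, Christoffel symbols, covariant derivatives, curvature, Ricci,
Schouten, Weyl, Cotton and Bach tensors, and the standard tractor
connection, all written in index notation. -/

noncomputable section

open scoped BigOperators

section Stmt19Aux

variable {n : ℕ}

lemma sum_split4 {ι : Type*} (s : Finset ι) (f g h k : ι → ℝ) :
    (∑ i ∈ s, (f i + g i + h i - k i))
      = (∑ i ∈ s, f i) + (∑ i ∈ s, g i) + (∑ i ∈ s, h i) - (∑ i ∈ s, k i) := by
  rw [← Finset.sum_add_distrib, ← Finset.sum_add_distrib, ← Finset.sum_sub_distrib]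

lemma exp_cancel (t : ℝ) : Real.exp (-t) * Real.exp t = 1 := by
  rw [← Real.exp_add]; simp

lemma double_split {ι κ : Type*} [Fintype ι] [Fintype κ]
    (f r : ι → κ → ℝ) (p u : ι → ℝ) (q v : κ → ℝ) (T : ℝ) :
    (∑ a, ∑ b, (f a b + p a * q b + T * r a b - u a * v b))
      = (∑ a, ∑ b, f a b) + (∑ a, p a) * (∑ b, q b)
        + T * (∑ a, ∑ b, r a b) - (∑ a, u a) * (∑ b, v b) := by
  have inner : ∀ a, (∑ b, (f a b + p a * q b + T * r a b - u a * v b))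
      = (∑ b, f a b) + p a * (∑ b, q b) + T * (∑ b, r a b) - u a * (∑ b, v b) := by
    intro a
    rw [sum_split4, ← Finset.mul_sum, ← Finset.mul_sum, ← Finset.mul_sum]
  rw [Finset.sum_congr rfl fun a _ => inner a, sum_split4, ← Finset.sum_mul,
    ← Finset.mul_sum, ← Finset.sum_mul]

lemma pd_mul (a : Fin n) (f g : Pt n → ℝ) (x : Pt n)
    (hf : DifferentiableAt ℝ f x) (hg : DifferentiableAt ℝ g x) :
    pd a (fun y => f y * g y) x = pd a f x * g x + f x * pd a g x := by
  unfold pd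
  rw [fderiv_fun_mul hf hg]
  simp [ContinuousLinearMap.add_apply, ContinuousLinearMap.smul_apply]
  ring

lemma pd_exp2 (a : Fin n) (Υ : Pt n → ℝ) (x : Pt n) (hΥ : ContDiff ℝ (⊤ : ℕ∞) Υ) :
    pd a (fun y => Real.exp (2 * Υ y)) x = Real.exp (2 * Υ x) * (2 * pd a Υ x) := by
  have h2 : DifferentiableAt ℝ (fun y => 2 * Υ y) x :=
    ((hΥ.differentiable (by simp)) x).const_mul 2
  unfold pd
  rw [fderiv_exp h2, fderiv_const_mul ((hΥ.differentiable (by simp)) x)]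
  simp [ContinuousLinearMap.smul_apply, mul_assoc]

/-- The metric is also a right inverse of `ginv`. -/
lemma g_mul_ginv (G : MetricG n) (x : Pt n) (a c : Fin n) :
    (∑ b, G.g x a b * G.ginv x b c) = if a = c then (1:ℝ) else 0 := by
  classical
  set A : Matrix (Fin n) (Fin n) ℝ := Matrix.of fun a b => G.ginv x a b with hA
  set B : Matrix (Fin n) (Fin n) ℝ := Matrix.of fun a b => G.g x a b with hB
  have hAB : A * B = 1 := by
    ext i j
    simp [Matrix.mul_apply, hA, hB, Matrix.one_apply, G.inv_mul x i j]
  have hBA : B * A = 1 := mul_eq_one_comm.mp hAB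
  have := congrFun (congrFun hBA a) c
  simpa [Matrix.mul_apply, hA, hB, Matrix.one_apply] using this

lemma ginv_conf (G Ghat : MetricG n) (Υ : Pt n → ℝ)
    (hconf : ∀ x a b, Ghat.g x a b = Real.exp (2 * Υ x) * G.g x a b)
    (x : Pt n) (a b : Fin n) :
    Ghat.ginv x a b = Real.exp (-(2 * Υ x)) * G.ginv x a b := by
  classical
  set A : Matrix (Fin n) (Fin n) ℝ := Matrix.of fun a b => Ghat.ginv x a b with hA
  set B : Matrix (Fin n) (Fin n) ℝ := Matrix.of fun a b => Ghat.g x a b with hB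
  set C : Matrix (Fin n) (Fin n) ℝ :=
    Matrix.of fun a b => Real.exp (-(2 * Υ x)) * G.ginv x a b with hC
  have hAB : A * B = 1 := by
    ext i j
    simp [Matrix.mul_apply, hA, hB, Matrix.one_apply, Ghat.inv_mul x i j]
  have hCB : C * B = 1 := by
    ext i j
    simp only [Matrix.mul_apply, hA, hB, hC, Matrix.of_apply, Matrix.one_apply]
    calc (∑ k, Real.exp (-(2 * Υ x)) * G.ginv x i k * Ghat.g x k j)
        = ∑ k, G.ginv x i k * G.g x k j := by
          refine Finset.sum_congr rfl fun k _ => ?_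
          rw [hconf x k j]
          linear_combination (G.ginv x i k * G.g x k j) * exp_cancel (2 * Υ x)
      _ = if i = j then 1 else 0 := G.inv_mul x i j
  have hBA : B * A = 1 := mul_eq_one_comm.mp hAB
  have hAC : A = C := by
    calc A = 1 * A := (one_mul A).symm
    _ = (C * B) * A := by rw [hCB]
    _ = C * (B * A) := by rw [Matrix.mul_assoc]
    _ = C := by rw [hBA, Matrix.mul_one]
  have := congrFun (congrFun hAC a) b
  simpa [hA, hC] using this

lemma pd_ghat (G Ghat : MetricG n) (Υ : Pt n → ℝ) (hΥ : ContDiff ℝ (⊤ : ℕ∞) Υ)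
    (hconf : ∀ x a b, Ghat.g x a b = Real.exp (2 * Υ x) * G.g x a b)
    (e d b : Fin n) (x : Pt n) :
    pd e (fun y => Ghat.g y d b) x
      = Real.exp (2 * Υ x) *
        (pd e (fun y => G.g y d b) x + 2 * pd e Υ x * G.g x d b) := by
  have hfun : (fun y => Ghat.g y d b) = fun y => Real.exp (2 * Υ y) * G.g y d b :=
    funext fun y => hconf y d b
  rw [hfun, pd_mul e _ _ x
      (((hΥ.differentiable (by simp)) x).const_mul 2).exp
      ((G.smooth d b).differentiable (by simp) x),
    pd_exp2 e Υ x hΥ]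
  ring

lemma Γ_conf (G Ghat : MetricG n) (Υ : Pt n → ℝ) (hΥ : ContDiff ℝ (⊤ : ℕ∞) Υ)
    (hconf : ∀ x a b, Ghat.g x a b = Real.exp (2 * Υ x) * G.g x a b)
    (c a b : Fin n) (x : Pt n) :
    Ghat.Γ c a b x = G.Γ c a b x
      + pd b Υ x * (if c = a then (1:ℝ) else 0)
      + pd a Υ x * (if c = b then (1:ℝ) else 0)
      - G.g x a b * ∑ d, G.ginv x c d * pd d Υ x := by
  unfold MetricG.Γ
  have hstep : ∀ d : Fin n,
      Ghat.ginv x c d *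
        (pd a (fun y => Ghat.g y d b) x + pd b (fun y => Ghat.g y d a) x
          - pd d (fun y => Ghat.g y a b) x)
      = G.ginv x c d *
        (pd a (fun y => G.g y d b) x + pd b (fun y => G.g y d a) x
          - pd d (fun y => G.g y a b) x)
        + 2 * pd b Υ x * (G.ginv x c d * G.g x d a)
        + 2 * pd a Υ x * (G.ginv x c d * G.g x d b)
        - 2 * pd d Υ x * (G.ginv x c d * G.g x a b) := by
    intro d
    rw [ginv_conf G Ghat Υ hconf, pd_ghat G Ghat Υ hΥ hconf,
      pd_ghat G Ghat Υ hΥ hconf, pd_ghat G Ghat Υ hΥ hconf]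
    linear_combination (G.ginv x c d *
      ((pd a (fun y => G.g y d b) x + 2 * pd a Υ x * G.g x d b)
        + (pd b (fun y => G.g y d a) x + 2 * pd b Υ x * G.g x d a)
        - (pd d (fun y => G.g y a b) x + 2 * pd d Υ x * G.g x a b)))
      * exp_cancel (2 * Υ x)
  rw [Finset.sum_congr rfl fun d _ => hstep d, sum_split4]
  have h1 : (∑ d, 2 * pd b Υ x * (G.ginv x c d * G.g x d a))
      = 2 * pd b Υ x * (if c = a then (1:ℝ) else 0) := by
    rw [← Finset.mul_sum, G.inv_mul x c a]
  have h2 : (∑ d, 2 * pd a Υ x * (G.ginv x c d * G.g x d b))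
      = 2 * pd a Υ x * (if c = b then (1:ℝ) else 0) := by
    rw [← Finset.mul_sum, G.inv_mul x c b]
  have h3 : (∑ d, 2 * pd d Υ x * (G.ginv x c d * G.g x a b))
      = 2 * (∑ d, G.ginv x c d * pd d Υ x) * G.g x a b := by
    simp only [Finset.mul_sum, Finset.sum_mul]
    exact Finset.sum_congr rfl fun d _ => by ring
  rw [h1, h2, h3]
  ring

lemma covVec_conf (G Ghat : MetricG n) (Υ : Pt n → ℝ) (hΥ : ContDiff ℝ (⊤ : ℕ∞) Υ)
    (hconf : ∀ x a b, Ghat.g x a b = Real.exp (2 * Υ x) * G.g x a b)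
    (K : Pt n → Pt n) (a c : Fin n) (x : Pt n) :
    Ghat.covVec K a c x = G.covVec K a c x
      + pd a Υ x * K x c
      + (if c = a then (1:ℝ) else 0) * (∑ e, pd e Υ x * K x e)
      - (∑ e, G.g x a e * K x e) * (∑ d, G.ginv x c d * pd d Υ x) := by
  unfold MetricG.covVec
  have hstep : ∀ e : Fin n, Ghat.Γ c a e x * K x e
      = G.Γ c a e x * K x e
        + (if c = a then (1:ℝ) else 0) * (pd e Υ x * K x e)
        + pd a Υ x * ((if c = e then (1:ℝ) else 0) * K x e)
        - (∑ d, G.ginv x c d * pd d Υ x) * (G.g x a e * K x e) := by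
    intro e
    rw [Γ_conf G Ghat Υ hΥ hconf]
    ring
  rw [Finset.sum_congr rfl fun e _ => hstep e, sum_split4]
  simp only [← Finset.mul_sum]
  rw [show (∑ e, (if c = e then (1:ℝ) else 0) * K x e) = K x c from by
    simp [ite_mul, Finset.sum_ite_eq]]
  ring

lemma Pi_conf (G Ghat : MetricG n) (Υ : Pt n → ℝ) (hΥ : ContDiff ℝ (⊤ : ℕ∞) Υ)
    (hconf : ∀ x a b, Ghat.g x a b = Real.exp (2 * Υ x) * G.g x a b)
    (K : Pt n → Pt n) (a b : Fin n) (x : Pt n) :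
    (∑ c, Ghat.g x c b * Ghat.covVec K a c x)
      = Real.exp (2 * Υ x) *
        ((∑ c, G.g x c b * G.covVec K a c x)
          + pd a Υ x * (∑ c, G.g x c b * K x c)
          + (∑ e, pd e Υ x * K x e) * G.g x a b
          - (∑ e, G.g x a e * K x e) * pd b Υ x) := by
  have hS : (∑ c, G.g x c b * (∑ d, G.ginv x c d * pd d Υ x)) = pd b Υ x := by
    have h1 : (∑ c, G.g x c b * (∑ d, G.ginv x c d * pd d Υ x))
        = ∑ d, (∑ c, G.g x b c * G.ginv x c d) * pd d Υ x := by
      simp only [Finset.mul_sum, Finset.sum_mul]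
      rw [Finset.sum_comm]
      exact Finset.sum_congr rfl fun d _ => Finset.sum_congr rfl fun c _ => by
        rw [G.symm x c b]; ring
    rw [h1]
    simp [g_mul_ginv G x b, ite_mul, Finset.sum_ite_eq]
  have hδ : (∑ c, G.g x c b * (if c = a then (1:ℝ) else 0)) = G.g x a b := by
    simp [mul_ite, Finset.sum_ite_eq']
  have hstep : ∀ c : Fin n, Ghat.g x c b * Ghat.covVec K a c x
      = Real.exp (2 * Υ x) *
          (G.g x c b * G.covVec K a c x
            + pd a Υ x * (G.g x c b * K x c)
            + (∑ e, pd e Υ x * K x e) * (G.g x c b * (if c = a then (1:ℝ) else 0))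
            - (∑ e, G.g x a e * K x e)
              * (G.g x c b * (∑ d, G.ginv x c d * pd d Υ x))) := by
    intro c
    rw [hconf x c b, covVec_conf G Ghat Υ hΥ hconf]
    ring
  rw [Finset.sum_congr rfl fun c _ => hstep c, ← Finset.mul_sum]
  congr 1
  rw [sum_split4]
  simp only [← Finset.mul_sum]
  rw [hS, hδ]

end Stmt19Aux

/-- Trace adjustment of the second fundamental form: Let K span a null
line bundle L ⊂ TM with integrable orthogonal distribution L^⊥, and let
Π_{ab} := g_{cb}∇_aK^c restricted to L^⊥ × L^⊥, with trace H = Σ ε_i Π(E_i,E_i) over a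
pseudo-orthonormal family E_1,…,E_{n−2} of L^⊥. Under a conformal change ĝ = e^{2Υ}g
the trace transforms as Ĥ = e^{2Υ}(H + (n−2)K^aΥ_a); hence if K^a∇_aΥ = −H/(n−2)
then Ĥ = 0. -/
theorem stmt_19 {n : ℕ} (hn : 3 ≤ n) (G Ghat : MetricG n) (Υ : Pt n → ℝ)
    (hΥ : ContDiff ℝ (⊤ : ℕ∞) Υ)
    (hconf : ∀ x a b, Ghat.g x a b = Real.exp (2 * Υ x) * G.g x a b)
    (K : Pt n → Pt n) (hKs : SmoothVF K) (hK0 : ∀ x, K x ≠ 0) (hnull : G.IsNull K)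
    (hint : ∀ X Y : Pt n → Pt n, SmoothVF X → SmoothVF Y →
      (∀ x, G.ip x (K x) (X x) = 0) → (∀ x, G.ip x (K x) (Y x) = 0) →
      ∀ x, G.ip x (K x)
        (fun b => (∑ a, X x a * pd a (fun y => Y y b) x)
          - ∑ a, Y x a * pd a (fun y => X y b) x) = 0)
    (x : Pt n) (E : Fin (n - 2) → Pt n) (ε : Fin (n - 2) → ℝ)
    (hε : ∀ i, ε i = 1 ∨ ε i = -1)
    (hEK : ∀ i, G.ip x (K x) (E i) = 0)
    (hEE : ∀ i j, G.ip x (E i) (E j) = if i = j then ε i else 0)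
    (H Hhat : ℝ)
    (hH : H = ∑ i, ε i * ∑ a, ∑ b, E i a * E i b * ∑ c, G.g x c b * G.covVec K a c x)
    (hHhat : Hhat = ∑ i, ε i * ∑ a, ∑ b, E i a * E i b *
      ∑ c, Ghat.g x c b * Ghat.covVec K a c x) :
    Hhat = Real.exp (2 * Υ x) * (H + ((n : ℝ) - 2) * ∑ a, K x a * pd a Υ x) ∧
      ((∑ a, K x a * pd a Υ x) = -H / ((n : ℝ) - 2) → Hhat = 0) := by
  classical
  set T : ℝ := ∑ a, K x a * pd a Υ x with hT
  have hn2 : ((n : ℝ) - 2) ≠ 0 := by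
    have : (3:ℝ) ≤ (n:ℝ) := by exact_mod_cast hn
    intro h; nlinarith
  have key : Hhat = Real.exp (2 * Υ x) * (H + ((n : ℝ) - 2) * T) := by
    have hTe : (∑ e, pd e Υ x * K x e) = T := by
      rw [hT]; exact Finset.sum_congr rfl fun e _ => by ring
    have hperi : ∀ i : Fin (n - 2),
        (∑ a, ∑ b, E i a * E i b * ∑ c, Ghat.g x c b * Ghat.covVec K a c x)
        = Real.exp (2 * Υ x) *
            ((∑ a, ∑ b, E i a * E i b * ∑ c, G.g x c b * G.covVec K a c x)
              + T * ε i) := by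
      intro i
      have hKE : (∑ b, E i b * ∑ c, G.g x c b * K x c) = 0 := by
        have := hEK i
        unfold MetricG.ip at this
        rw [← this, Finset.sum_comm]
        refine Finset.sum_congr rfl fun b _ => ?_
        rw [Finset.mul_sum]
        exact Finset.sum_congr rfl fun c _ => by ring
      have hEKa : (∑ a, E i a * ∑ e, G.g x a e * K x e) = 0 := by
        have := hEK i
        unfold MetricG.ip at this
        rw [← this, Finset.sum_comm]
        refine Finset.sum_congr rfl fun a _ => ?_
        rw [Finset.mul_sum]
        exact Finset.sum_congr rfl fun e _ => by rw [G.symm x e a]; ring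
      have hEEi : (∑ a, ∑ b, E i a * E i b * G.g x a b) = ε i := by
        have : G.ip x (E i) (E i) = ε i := by rw [hEE i i]; simp
        rw [← this]
        unfold MetricG.ip
        exact Finset.sum_congr rfl fun a _ => Finset.sum_congr rfl fun b _ => by ring
      calc (∑ a, ∑ b, E i a * E i b * ∑ c, Ghat.g x c b * Ghat.covVec K a c x)
          = ∑ a, ∑ b, Real.exp (2 * Υ x) *
              (E i a * E i b * (∑ c, G.g x c b * G.covVec K a c x)
                + (E i a * pd a Υ x) * (E i b * (∑ c, G.g x c b * K x c))
                + T * (E i a * E i b * G.g x a b)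
                - (E i a * (∑ e, G.g x a e * K x e)) * (E i b * pd b Υ x)) := by
            refine Finset.sum_congr rfl fun a _ => Finset.sum_congr rfl fun b _ => ?_
            rw [Pi_conf G Ghat Υ hΥ hconf K a b x, hTe]
            ring
        _ = Real.exp (2 * Υ x) * ∑ a, ∑ b,
              (E i a * E i b * (∑ c, G.g x c b * G.covVec K a c x)
                + (E i a * pd a Υ x) * (E i b * (∑ c, G.g x c b * K x c))
                + T * (E i a * E i b * G.g x a b)
                - (E i a * (∑ e, G.g x a e * K x e)) * (E i b * pd b Υ x)) := by
            simp only [Finset.mul_sum]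
        _ = Real.exp (2 * Υ x) *
              ((∑ a, ∑ b, E i a * E i b * ∑ c, G.g x c b * G.covVec K a c x)
                + (∑ a, E i a * pd a Υ x) * (∑ b, E i b * (∑ c, G.g x c b * K x c))
                + T * (∑ a, ∑ b, E i a * E i b * G.g x a b)
                - (∑ a, E i a * (∑ e, G.g x a e * K x e)) * (∑ b, E i b * pd b Υ x)) := by
            rw [double_split]
        _ = Real.exp (2 * Υ x) *
              ((∑ a, ∑ b, E i a * E i b * ∑ c, G.g x c b * G.covVec K a c x)
                + T * ε i) := by
            rw [hKE, hEKa, hEEi]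
            ring
    rw [hHhat, Finset.sum_congr rfl fun i _ => by rw [hperi i]]
    have hsq : ∀ i : Fin (n - 2), ε i * ε i = 1 := by
      intro i; rcases hε i with h | h <;> rw [h] <;> norm_num
    have hcard : ((Fintype.card (Fin (n - 2)) : ℝ)) = (n : ℝ) - 2 := by
      rw [Fintype.card_fin]
      have h2 : (2:ℕ) ≤ n := by omega
      push_cast [Nat.cast_sub h2]
      ring
    calc (∑ i, ε i * (Real.exp (2 * Υ x) *
            ((∑ a, ∑ b, E i a * E i b * ∑ c, G.g x c b * G.covVec K a c x) + T * ε i)))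
        = Real.exp (2 * Υ x) *
            ((∑ i, ε i * (∑ a, ∑ b, E i a * E i b * ∑ c, G.g x c b * G.covVec K a c x))
              + T * ∑ i, ε i * ε i) := by
          simp only [mul_add, Finset.mul_sum, ← Finset.sum_add_distrib]
          exact Finset.sum_congr rfl fun i _ => by ring
      _ = Real.exp (2 * Υ x) * (H + ((n : ℝ) - 2) * T) := by
          rw [← hH, Finset.sum_congr rfl fun i _ => hsq i, Finset.sum_const,
            Finset.card_univ, nsmul_eq_mul, mul_one, hcard]
          ring
  refine ⟨key, fun hcrit => ?_⟩
  have hdiv : ((n : ℝ) - 2) * (-H / ((n : ℝ) - 2)) = -H := by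
    field_simp
  rw [key, hcrit, hdiv]
  ring
end
end
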